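/- arXiv:0807.0599 — 6 statements merged into one kernel-verified Lean document; each statement's English description precedes it below -/
import Mathlib

section
/- If N is a normal subgroup of a finite group G of index n with coset representatives g_1,...,g_n, then in the group algebra A = k[G] with subalgebra B = k[N], for all x, y ∈ A one has x ⊗_B y = Σ_j x γ_j(y) u_j, where u_j = g_j^{-1} ⊗_B g_j ∈ (A ⊗_B A)^B and γ_j is the B-bimodule map sending Σ_g n_g g to Σ_{h∈N} n_{h g_j} h g_j; in particular B is a depth two subring of A. -/
/-!
Every `y ∈ k[G]` is the sum of its components `γ_j(y)` along the cosets `N g_j`, and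
`γ_j(y) g_j⁻¹` lies in `B = k[N]`; hence `x ⊗_B γ_j(y) = x γ_j(y) g_j⁻¹ ⊗_B g_j`, which summed
over `j` is the quasibasis identity. The `γ_j` are `B`-bilinear because `N` is normal, and
`g_j⁻¹ ⊗ g_j` is `B`-central because conjugation by `g_j` preserves `B`. Finally
`x ⊗_B y ↦ (x γ_j(y))_j` is well defined by left `B`-linearity of the `γ_j`, and the quasibasis
identity says that it splits `A^n → A ⊗_B A`, `(a_j) ↦ Σ_j a_j g_j⁻¹ ⊗_B g_j`.
-/

open TensorProduct MonoidAlgebra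

/-- Projection of a group algebra element onto the span of the coset `N·gj`:
`Σ_g n_g g ↦ Σ_{h ∈ N} n_{h gj} (h gj)`. -/
noncomputable def cosetProjection (k : Type*) [Field k] {G : Type*} [Group G]
    (N : Subgroup G) (gj : G) (f : MonoidAlgebra k G) : MonoidAlgebra k G :=
  letI : DecidablePred (fun x : G => x * gj⁻¹ ∈ N) := Classical.decPred _
  MonoidAlgebra.ofCoeff (Finsupp.filter (fun x : G => x * gj⁻¹ ∈ N) f.coeff)

section Balancing

variable {k A : Type*} [CommRing k] [Ring A] [Algebra k A]

/-- The kernel of `A ⊗[k] A → A ⊗[B] A`. -/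
def balancingSubmodule (B : Subalgebra k A) : Submodule k (A ⊗[k] A) :=
  Submodule.span k {z | ∃ (x y : A) (b : A), b ∈ B ∧ z = (x * b) ⊗ₜ[k] y - x ⊗ₜ[k] (b * y)}

variable {B : Subalgebra k A}

lemma mul_tmul_sub_tmul_mul_mem_balancingSubmodule (x y : A) {b : A} (hb : b ∈ B) :
    (x * b) ⊗ₜ[k] y - x ⊗ₜ[k] (b * y) ∈ balancingSubmodule B :=
  Submodule.subset_span ⟨x, y, b, hb, rfl⟩

lemma mul_tmul_sub_tmul_mul_mem_balancingSubmodule_of_conj_mem {a a' b : A} (ha : a' * a = 1)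
    (hb : a * b * a' ∈ B) :
    (b * a') ⊗ₜ[k] a - a' ⊗ₜ[k] (a * b) ∈ balancingSubmodule B := by
  have hleft : a' * (a * b * a') = b * a' := by
    rw [← mul_assoc, ← mul_assoc, ha, one_mul]
  have hright : a * b * a' * a = a * b := by rw [mul_assoc, ha, mul_one]
  simpa only [hleft, hright] using mul_tmul_sub_tmul_mul_mem_balancingSubmodule a' a hb

theorem exists_splitting_of_quasibasis {ι : Type*} [Fintype ι] (γ : ι → A →ₗ[k] A)
    (hγ : ∀ i, ∀ b ∈ B, ∀ a, γ i (b * a) = b * γ i a) (u v : ι → A)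
    (hquasi : ∀ x y, x ⊗ₜ[k] y - ∑ i, (x * γ i y * u i) ⊗ₜ[k] v i ∈ balancingSubmodule B) :
    ∃ ψ : (A ⊗[k] A ⧸ balancingSubmodule B) →ₗ[k] (ι → A),
      (∀ x y, ψ (Submodule.Quotient.mk (x ⊗ₜ[k] y)) = fun i => x * γ i y) ∧
      ∀ q, ∑ i, Submodule.Quotient.mk ((ψ q i * u i) ⊗ₜ[k] v i) = q := by
  let φ : A ⊗[k] A →ₗ[k] (ι → A) :=
    LinearMap.pi fun i => TensorProduct.lift ((LinearMap.mul k A).compl₂ (γ i))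
  have hφ : ∀ x y, φ (x ⊗ₜ[k] y) = fun i => x * γ i y := fun _ _ => rfl
  have hker : balancingSubmodule B ≤ LinearMap.ker φ := by
    refine Submodule.span_le.mpr ?_
    rintro _ ⟨x, y, b, hb, rfl⟩
    ext i
    simp [hφ, hγ i b hb, mul_assoc]
  refine ⟨Submodule.liftQ _ φ hker, fun x y => hφ x y, fun q => ?_⟩
  induction q using Submodule.Quotient.induction_on with | _ t
  induction t using TensorProduct.induction_on with
  | zero => simp
  | tmul x y =>
    rw [Submodule.liftQ_apply, hφ]
    simp only [← Submodule.mkQ_apply, ← map_sum]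
    exact ((Submodule.Quotient.eq _).mpr (hquasi x y)).symm
  | add t₁ t₂ h₁ h₂ =>
    rw [Submodule.Quotient.mk_add, map_add]
    simp only [Pi.add_apply, add_mul, add_tmul, Submodule.Quotient.mk_add,
      Finset.sum_add_distrib, h₁, h₂]

end Balancing

section SubgroupAlgebra

variable {k : Type*} [CommSemiring k] {G : Type*} [Group G] (N : Subgroup G)

lemma single_mem_adjoin {h : G} (hh : h ∈ N) (c : k) :
    single h c ∈ Algebra.adjoin k (of k G '' N) := by
  rw [← smul_of]
  exact Subalgebra.smul_mem _ (Algebra.subset_adjoin (Set.mem_image_of_mem _ hh)) c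

lemma of_mul_mul_of_inv_mem_adjoin [N.Normal] (g : G) {b : MonoidAlgebra k G}
    (hb : b ∈ Algebra.adjoin k (of k G '' N)) :
    of k G g * b * of k G g⁻¹ ∈ Algebra.adjoin k (of k G '' N) := by
  have hinv : of k G g⁻¹ * of k G g = 1 := by rw [← map_mul, inv_mul_cancel, map_one]
  induction hb using Algebra.adjoin_induction with
  | mem _ hx =>
    obtain ⟨h, hh, rfl⟩ := hx
    rw [← map_mul, ← map_mul]
    exact Algebra.subset_adjoin (Set.mem_image_of_mem _ (Subgroup.Normal.conj_mem ‹_› h hh g))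
  | algebraMap r =>
    rw [← Algebra.commutes, mul_assoc, ← map_mul, mul_inv_cancel, map_one, mul_one]
    exact Subalgebra.algebraMap_mem _ r
  | add x y _ _ hx hy =>
    rw [mul_add, add_mul]
    exact add_mem hx hy
  | mul x y _ _ hx hy =>
    have hsplit : of k G g * (x * y) * of k G g⁻¹ =
        (of k G g * x * of k G g⁻¹) * (of k G g * y * of k G g⁻¹) := by
      simp only [mul_assoc, ← mul_assoc (of k G g⁻¹) (of k G g), hinv, one_mul]
    rw [hsplit]
    exact mul_mem hx hy

end SubgroupAlgebra

section CosetProjection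

variable {k : Type*} [Field k] {G : Type*} [Group G] (N : Subgroup G)

lemma coeff_cosetProjection_of_mem {gj x : G} (hx : x * gj⁻¹ ∈ N) (f : MonoidAlgebra k G) :
    (cosetProjection k N gj f).coeff x = f.coeff x := by
  classical
  exact Finsupp.filter_apply_pos _ _ hx

lemma coeff_cosetProjection_of_notMem {gj x : G} (hx : x * gj⁻¹ ∉ N) (f : MonoidAlgebra k G) :
    (cosetProjection k N gj f).coeff x = 0 := by
  classical
  exact Finsupp.filter_apply_neg _ _ hx

lemma cosetProjection_add (gj : G) (f f' : MonoidAlgebra k G) :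
    cosetProjection k N gj (f + f') = cosetProjection k N gj f + cosetProjection k N gj f' := by
  classical
  exact congrArg ofCoeff Finsupp.filter_add

lemma cosetProjection_smul (gj : G) (c : k) (f : MonoidAlgebra k G) :
    cosetProjection k N gj (c • f) = c • cosetProjection k N gj f := by
  classical
  exact congrArg ofCoeff Finsupp.filter_smul

lemma cosetProjection_zero (gj : G) : cosetProjection k N gj (0 : MonoidAlgebra k G) = 0 := by
  classical
  exact congrArg ofCoeff (Finsupp.filter_zero _)

variable (k) in
noncomputable def cosetProjectionLinearMap (gj : G) :
    MonoidAlgebra k G →ₗ[k] MonoidAlgebra k G where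
  toFun := cosetProjection k N gj
  map_add' := cosetProjection_add N gj
  map_smul' := cosetProjection_smul N gj

lemma cosetProjection_single_of_mem {gj x : G} (hx : x * gj⁻¹ ∈ N) (c : k) :
    cosetProjection k N gj (single x c) = single x c := by
  classical
  exact congrArg ofCoeff (Finsupp.filter_single_of_pos _ hx)

lemma cosetProjection_single_of_notMem {gj x : G} (hx : x * gj⁻¹ ∉ N) (c : k) :
    cosetProjection k N gj (single x c) = 0 := by
  classical
  exact congrArg ofCoeff (Finsupp.filter_single_of_neg _ hx)

lemma cosetProjection_of_mul {gj h : G} (hh : h ∈ N) (a : MonoidAlgebra k G) :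
    cosetProjection k N gj (of k G h * a) = of k G h * cosetProjection k N gj a := by
  ext x
  have hmem : (h⁻¹ * x) * gj⁻¹ ∈ N ↔ x * gj⁻¹ ∈ N := by
    rw [mul_assoc, Subgroup.mul_mem_cancel_left N (N.inv_mem hh)]
  by_cases hx : x * gj⁻¹ ∈ N
  · simp only [of_apply, coeff_cosetProjection_of_mem N hx, coeff_single_mul_apply, one_mul,
      coeff_cosetProjection_of_mem N (hmem.mpr hx)]
  · simp only [of_apply, coeff_cosetProjection_of_notMem N hx, coeff_single_mul_apply,
      coeff_cosetProjection_of_notMem N (hmem.not.mpr hx), mul_zero]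

lemma cosetProjection_mul_of [N.Normal] {gj h : G} (hh : h ∈ N) (a : MonoidAlgebra k G) :
    cosetProjection k N gj (a * of k G h) = cosetProjection k N gj a * of k G h := by
  ext x
  have hmem : (x * h⁻¹) * gj⁻¹ ∈ N ↔ x * gj⁻¹ ∈ N := by
    rw [show (x * h⁻¹) * gj⁻¹ = (x * gj⁻¹) * (gj * h⁻¹ * gj⁻¹) by group,
      Subgroup.mul_mem_cancel_right N (Subgroup.Normal.conj_mem ‹_› _ (N.inv_mem hh) gj)]
  by_cases hx : x * gj⁻¹ ∈ N
  · simp only [of_apply, coeff_cosetProjection_of_mem N hx, coeff_mul_single_apply, mul_one,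
      coeff_cosetProjection_of_mem N (hmem.mpr hx)]
  · simp only [of_apply, coeff_cosetProjection_of_notMem N hx, coeff_mul_single_apply,
      coeff_cosetProjection_of_notMem N (hmem.not.mpr hx), zero_mul]

lemma cosetProjection_mul_left (gj : G) {b : MonoidAlgebra k G}
    (hb : b ∈ Algebra.adjoin k (of k G '' N)) (a : MonoidAlgebra k G) :
    cosetProjection k N gj (b * a) = b * cosetProjection k N gj a := by
  induction hb using Algebra.adjoin_induction generalizing a with
  | mem _ hx =>
    obtain ⟨h, hh, rfl⟩ := hx
    exact cosetProjection_of_mul N hh a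
  | algebraMap r => rw [← Algebra.smul_def, ← Algebra.smul_def, cosetProjection_smul]
  | add x y _ _ hx hy => rw [add_mul, cosetProjection_add, hx, hy, add_mul]
  | mul x y _ _ hx hy => rw [mul_assoc, hx, hy, mul_assoc]

lemma cosetProjection_mul_right [N.Normal] (gj : G) {b : MonoidAlgebra k G}
    (hb : b ∈ Algebra.adjoin k (of k G '' N)) (a : MonoidAlgebra k G) :
    cosetProjection k N gj (a * b) = cosetProjection k N gj a * b := by
  induction hb using Algebra.adjoin_induction generalizing a with
  | mem _ hx =>
    obtain ⟨h, hh, rfl⟩ := hx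
    exact cosetProjection_mul_of N hh a
  | algebraMap r =>
    rw [← Algebra.commutes, ← Algebra.smul_def, ← Algebra.commutes, ← Algebra.smul_def,
      cosetProjection_smul]
  | add x y _ _ hx hy => rw [mul_add, cosetProjection_add, hx, hy, mul_add]
  | mul x y _ _ hx hy => rw [← mul_assoc, hy, hx, mul_assoc]

theorem tmul_sub_sum_cosetProjection_mem_balancingSubmodule {ι : Type*} [Fintype ι]
    (g : ι → G) (hreps : ∀ x : G, ∃! j, x * (g j)⁻¹ ∈ N) (x y : MonoidAlgebra k G) :
    x ⊗ₜ[k] y - ∑ j, (x * cosetProjection k N (g j) y * of k G (g j)⁻¹) ⊗ₜ[k] of k G (g j) ∈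
      balancingSubmodule (Algebra.adjoin k (of k G '' N)) := by
  induction y using MonoidAlgebra.induction_linear with
  | zero => simp [cosetProjection_zero]
  | add y₁ y₂ h₁ h₂ =>
    simp only [cosetProjection_add, mul_add, add_mul, tmul_add, add_tmul,
      Finset.sum_add_distrib, add_sub_add_comm]
    exact add_mem h₁ h₂
  | single x' c =>
    classical
    obtain ⟨j₀, hj₀, huniq⟩ := hreps x'
    have hproj : ∀ j, cosetProjection k N (g j) (single x' c) =
        if j = j₀ then single x' c else 0 := by
      intro j
      split_ifs with hj
      · exact hj ▸ cosetProjection_single_of_mem N hj₀ c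
      · exact cosetProjection_single_of_notMem N (fun h => hj (huniq j h)) c
    have hb := single_mem_adjoin N hj₀ c
    have h₁ : single x' c * of k G (g j₀)⁻¹ = single (x' * (g j₀)⁻¹) c := by
      rw [of_apply, single_mul_single, mul_one]
    have h₂ : single (x' * (g j₀)⁻¹) c * of k G (g j₀) = single x' c := by
      rw [of_apply, single_mul_single, inv_mul_cancel_right, mul_one]
    simp only [hproj, mul_ite, ite_mul, mul_zero, zero_mul, ite_tmul,
      Finset.sum_ite_eq', Finset.mem_univ, if_true, mul_assoc, h₁]
    rw [← neg_sub, ← h₂]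
    exact neg_mem (mul_tmul_sub_tmul_mul_mem_balancingSubmodule x _ hb)

end CosetProjection

theorem group_algebra_normal_subgroup_depth_two_quasibasis_general
    (k : Type*) [Field k] (G : Type*) [Group G]
    (N : Subgroup G) [N.Normal] (n : ℕ) (g : Fin n → G)
    (hreps : ∀ x : G, ∃! j : Fin n, x * (g j)⁻¹ ∈ N) :
    ∀ (B : Subalgebra k (MonoidAlgebra k G)),
      B = Algebra.adjoin k ((fun h => MonoidAlgebra.of k G h) '' (N : Set G)) →
    ∀ (rel : Submodule k (MonoidAlgebra k G ⊗[k] MonoidAlgebra k G)),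
      rel = Submodule.span k {z | ∃ (x y : MonoidAlgebra k G) (b : MonoidAlgebra k G),
        b ∈ B ∧ z = (x * b) ⊗ₜ[k] y - x ⊗ₜ[k] (b * y)} →
    -- (1) each `γ_j` is a `B`-bimodule map
    (∀ (j : Fin n) (b b' : MonoidAlgebra k G), b ∈ B → b' ∈ B →
      ∀ a, cosetProjection k N (g j) (b * a * b') = b * cosetProjection k N (g j) a * b') ∧
    -- (2) each `u_j = g_j⁻¹ ⊗_B g_j` is `B`-central
    (∀ (j : Fin n), ∀ b ∈ B,
      (b * MonoidAlgebra.of k G (g j)⁻¹) ⊗ₜ[k] MonoidAlgebra.of k G (g j)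
        - MonoidAlgebra.of k G (g j)⁻¹ ⊗ₜ[k] (MonoidAlgebra.of k G (g j) * b) ∈ rel) ∧
    -- (3) the right depth two quasibasis equation `x ⊗_B y = Σ_j x γ_j(y) u_j`
    (∀ x y : MonoidAlgebra k G,
      x ⊗ₜ[k] y - ∑ j : Fin n,
        (x * cosetProjection k N (g j) y * MonoidAlgebra.of k G (g j)⁻¹)
          ⊗ₜ[k] MonoidAlgebra.of k G (g j) ∈ rel) ∧
    -- (4) hence `A ⊗_B A` is a direct summand of `A^n`: the evident epimorphism splits
    (∃ ψ : ((MonoidAlgebra k G ⊗[k] MonoidAlgebra k G) ⧸ rel) →ₗ[k]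
        (Fin n → MonoidAlgebra k G),
      (∀ x y : MonoidAlgebra k G, ψ (Submodule.Quotient.mk (x ⊗ₜ[k] y)) =
        fun j => x * cosetProjection k N (g j) y) ∧
      (∀ q, (∑ j : Fin n, Submodule.Quotient.mk
          ((ψ q j * MonoidAlgebra.of k G (g j)⁻¹) ⊗ₜ[k] MonoidAlgebra.of k G (g j))) = q)) := by
  rintro B rfl rel rfl
  have hquasi := tmul_sub_sum_cosetProjection_mem_balancingSubmodule (k := k) N g hreps
  refine ⟨fun j b b' hb hb' a => ?_, fun j b hb => ?_, hquasi, ?_⟩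
  · rw [cosetProjection_mul_right N _ hb', cosetProjection_mul_left N _ hb]
  · refine mul_tmul_sub_tmul_mul_mem_balancingSubmodule_of_conj_mem ?_
      (of_mul_mul_of_inv_mem_adjoin N (g j) hb)
    rw [← map_mul, inv_mul_cancel, map_one]
  · exact exists_splitting_of_quasibasis (fun j => cosetProjectionLinearMap k N (g j))
      (fun j _ hb a => cosetProjection_mul_left N (g j) hb a) _ _ hquasi

/-- If `N` is a normal subgroup of a finite group `G` of index `n` with (right)
coset representatives `g 0, …, g (n-1)`, then in `A = k[G]` with `B = k[N]`, for all `x, y ∈ A`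
one has `x ⊗_B y = Σ_j x γ_j(y) u_j`, where `u_j = g_j⁻¹ ⊗_B g_j` is `B`-central and `γ_j` is
the `B`-bimodule map projecting onto the coset `N g_j`; in particular `B` is a depth two subring
of `A` (the quasibasis yields a split epimorphism `A^n → A ⊗_B A`). -/
theorem group_algebra_normal_subgroup_depth_two_quasibasis
    (k : Type*) [Field k] (G : Type*) [Group G] [Fintype G]
    (N : Subgroup G) [N.Normal] (n : ℕ) (g : Fin n → G)
    (hreps : ∀ x : G, ∃! j : Fin n, x * (g j)⁻¹ ∈ N) :
    ∀ (B : Subalgebra k (MonoidAlgebra k G)),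
      B = Algebra.adjoin k ((fun h => MonoidAlgebra.of k G h) '' (N : Set G)) →
    ∀ (rel : Submodule k (MonoidAlgebra k G ⊗[k] MonoidAlgebra k G)),
      rel = Submodule.span k {z | ∃ (x y : MonoidAlgebra k G) (b : MonoidAlgebra k G),
        b ∈ B ∧ z = (x * b) ⊗ₜ[k] y - x ⊗ₜ[k] (b * y)} →
    -- (1) each `γ_j` is a `B`-bimodule map
    (∀ (j : Fin n) (b b' : MonoidAlgebra k G), b ∈ B → b' ∈ B →
      ∀ a, cosetProjection k N (g j) (b * a * b') = b * cosetProjection k N (g j) a * b') ∧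
    -- (2) each `u_j = g_j⁻¹ ⊗_B g_j` is `B`-central
    (∀ (j : Fin n), ∀ b ∈ B,
      (b * MonoidAlgebra.of k G (g j)⁻¹) ⊗ₜ[k] MonoidAlgebra.of k G (g j)
        - MonoidAlgebra.of k G (g j)⁻¹ ⊗ₜ[k] (MonoidAlgebra.of k G (g j) * b) ∈ rel) ∧
    -- (3) the right depth two quasibasis equation `x ⊗_B y = Σ_j x γ_j(y) u_j`
    (∀ x y : MonoidAlgebra k G,
      x ⊗ₜ[k] y - ∑ j : Fin n,
        (x * cosetProjection k N (g j) y * MonoidAlgebra.of k G (g j)⁻¹)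
          ⊗ₜ[k] MonoidAlgebra.of k G (g j) ∈ rel) ∧
    -- (4) hence `A ⊗_B A` is a direct summand of `A^n`: the evident epimorphism splits
    (∃ ψ : ((MonoidAlgebra k G ⊗[k] MonoidAlgebra k G) ⧸ rel) →ₗ[k]
        (Fin n → MonoidAlgebra k G),
      (∀ x y : MonoidAlgebra k G, ψ (Submodule.Quotient.mk (x ⊗ₜ[k] y)) =
        fun j => x * cosetProjection k N (g j) y) ∧
      (∀ q, (∑ j : Fin n, Submodule.Quotient.mk
          ((ψ q j * MonoidAlgebra.of k G (g j)⁻¹) ⊗ₜ[k] MonoidAlgebra.of k G (g j))) = q)) :=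
  group_algebra_normal_subgroup_depth_two_quasibasis_general k G N n g hreps
end

section
/- Let H be a finite dimensional Hopf algebra over a field k, A a right H-comodule algebra with coinvariant subalgebra B = A^{co H}, and suppose the Galois map β: A ⊗_B A → A ⊗ H, β(x ⊗ y) = x y_{(0)} ⊗ y_{(1)}, is bijective. Then A ⊗_B A ≅ A^n as A-B-bimodules where n = dim_k H; in particular B ⊆ A is right depth two. -/
/-!
The Galois map is `β(x ⊗ y) = (x ⊗ 1) ρ(y)`, so multiplicativity of `ρ` together with
`ρ(b) = b ⊗ 1` for coinvariant `b` gives `β(c x ⊗ y b) = (c ⊗ 1) β(x ⊗ y) (b ⊗ 1)`: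
`β` is an isomorphism of `A`-`B`-bimodules onto `A ⊗ H`. A basis of `H` identifies `A ⊗ H`
with `A^n`, naturally in `A`, hence compatibly with `c · - · b`.
-/

open TensorProduct Coalgebra HopfAlgebra

namespace TensorProduct

section Coordinates

variable {k : Type*} [CommSemiring k] {ι : Type*} [Fintype ι] [DecidableEq ι]
  {M : Type*} [AddCommMonoid M] [Module k M]

noncomputable def basisEquivFun (A : Type*) [AddCommMonoid A] [Module k A]
    (bM : Module.Basis ι k M) : A ⊗[k] M ≃ₗ[k] (ι → A) :=
  (congr (LinearEquiv.refl k A) bM.equivFun).trans (piScalarRight k k A ι)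

theorem basisEquivFun_rTensor {A A' : Type*} [AddCommMonoid A] [Module k A]
    [AddCommMonoid A'] [Module k A'] (bM : Module.Basis ι k M) (f : A →ₗ[k] A')
    (z : A ⊗[k] M) :
    basisEquivFun A' bM (LinearMap.rTensor M f z) = f ∘ basisEquivFun A bM z := by
  induction z using TensorProduct.induction_on with
  | zero => ext; simp
  | tmul a m => ext; simp [basisEquivFun]
  | add z₁ z₂ h₁ h₂ => ext; simp [h₁, h₂]

end Coordinates

section Multiplication

variable {k : Type*} [CommSemiring k] {A : Type*} [Semiring A] [Algebra k A]
  {H : Type*} [Semiring H] [Algebra k H]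

theorem map_mul'_id_assoc_symm_tmul (x : A) (t : A ⊗[k] H) :
    map (LinearMap.mul' k A) LinearMap.id ((TensorProduct.assoc k A A H).symm (x ⊗ₜ t)) =
      (x ⊗ₜ 1) * t := by
  induction t using TensorProduct.induction_on with
  | zero => simp
  | tmul a h => simp
  | add t₁ t₂ h₁ h₂ => simp [tmul_add, mul_add, h₁, h₂]

theorem tmul_one_mul_mul_tmul_one (c b : A) (z : A ⊗[k] H) :
    (c ⊗ₜ 1) * z * (b ⊗ₜ 1) =
      LinearMap.rTensor H (LinearMap.mulLeft k c ∘ₗ LinearMap.mulRight k b) z := by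
  induction z using TensorProduct.induction_on with
  | zero => simp
  | tmul a h => simp [mul_assoc]
  | add z₁ z₂ h₁ h₂ => simp [mul_add, add_mul, h₁, h₂]

end Multiplication

end TensorProduct

theorem hopf_galois_extension_is_depth_two_general
    (k : Type*) [Field k] (H : Type*) [Ring H] [HopfAlgebra k H] [FiniteDimensional k H]
    (A : Type*) [Ring A] [Algebra k A]
    -- the coaction of a right `H`-comodule algebra structure on `A`
    (ρ : A →ₐ[k] A ⊗[k] H) :
    -- coinvariants
    ∀ (Bset : Set A), Bset = {b : A | ρ b = b ⊗ₜ[k] (1 : H)} →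
    -- the relations defining `A ⊗_B A` as a quotient of `A ⊗[k] A`
    ∀ (rel : Submodule k (A ⊗[k] A)), rel = Submodule.span k
      {z : A ⊗[k] A | ∃ (x y b : A), b ∈ Bset ∧ z = (x * b) ⊗ₜ[k] y - x ⊗ₜ[k] (b * y)} →
    -- the Galois map `β` descends to a bijection `A ⊗_B A ≅ A ⊗ H`
    (∃ βbar : ((A ⊗[k] A) ⧸ rel) →ₗ[k] A ⊗[k] H,
      (∀ x y : A, βbar (Submodule.Quotient.mk (x ⊗ₜ[k] y)) =
        (TensorProduct.map (LinearMap.mul' k A) LinearMap.id)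
          ((TensorProduct.assoc k A A H).symm
            (LinearMap.lTensor A ρ.toLinearMap (x ⊗ₜ[k] y)))) ∧
      Function.Bijective βbar) →
    -- conclusion: `A ⊗_B A ≅ A^n` as `A`-`B`-bimodules, `n = dim_k H`
    ∃ e : ((A ⊗[k] A) ⧸ rel) ≃ₗ[k] (Fin (Module.finrank k H) → A),
      ∀ (c x y : A), ∀ b ∈ Bset,
        e (Submodule.Quotient.mk ((c * x) ⊗ₜ[k] (y * b))) =
          fun i => c * (e (Submodule.Quotient.mk (x ⊗ₜ[k] y)) i) * b := by
  rintro Bset rfl rel - ⟨β, hβ, hbij⟩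
  refine ⟨(LinearEquiv.ofBijective β hbij).trans (basisEquivFun A (Module.finBasis k H)), ?_⟩
  intro c x y b (hb : ρ b = b ⊗ₜ 1)
  have hβ_bimodule : β (Submodule.Quotient.mk ((c * x) ⊗ₜ (y * b))) =
      (c ⊗ₜ 1) * β (Submodule.Quotient.mk (x ⊗ₜ y)) * (b ⊗ₜ 1) := by
    simp only [hβ, LinearMap.lTensor_tmul, AlgHom.toLinearMap_apply,
      map_mul'_id_assoc_symm_tmul, map_mul, hb]
    rw [← mul_one (1 : H), ← Algebra.TensorProduct.tmul_mul_tmul]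
    simp only [mul_one, mul_assoc]
  simp only [LinearEquiv.trans_apply, LinearEquiv.ofBijective_apply, hβ_bimodule,
    tmul_one_mul_mul_tmul_one, basisEquivFun_rTensor]
  ext i
  simp [mul_assoc]

/-- Let `H` be a finite dimensional Hopf algebra over a field `k`, `A` a right
`H`-comodule algebra with coinvariant subalgebra `B = A^{co H}`, and suppose the Galois map
`β : A ⊗_B A → A ⊗ H`, `β(x ⊗ y) = x y₍₀₎ ⊗ y₍₁₎` is bijective.  Then `A ⊗_B A ≅ A^n` as
`A`-`B`-bimodules where `n = dim_k H`; in particular `B ⊆ A` is right depth two. -/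
theorem hopf_galois_extension_is_depth_two
    (k : Type*) [Field k] (H : Type*) [Ring H] [HopfAlgebra k H] [FiniteDimensional k H]
    (A : Type*) [Ring A] [Algebra k A]
    -- the coaction of a right `H`-comodule algebra structure on `A`
    (ρ : A →ₐ[k] A ⊗[k] H)
    (hcoassoc : ∀ a : A,
      TensorProduct.assoc k A H H (LinearMap.rTensor H ρ.toLinearMap (ρ a)) =
        LinearMap.lTensor A (comul (R := k)) (ρ a))
    (hcounit : ∀ a : A,
      TensorProduct.rid k A (LinearMap.lTensor A (counit (R := k)) (ρ a)) = a) :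
    -- coinvariants
    ∀ (Bset : Set A), Bset = {b : A | ρ b = b ⊗ₜ[k] (1 : H)} →
    -- the relations defining `A ⊗_B A` as a quotient of `A ⊗[k] A`
    ∀ (rel : Submodule k (A ⊗[k] A)), rel = Submodule.span k
      {z : A ⊗[k] A | ∃ (x y b : A), b ∈ Bset ∧ z = (x * b) ⊗ₜ[k] y - x ⊗ₜ[k] (b * y)} →
    -- the Galois map `β` descends to a bijection `A ⊗_B A ≅ A ⊗ H`
    (∃ βbar : ((A ⊗[k] A) ⧸ rel) →ₗ[k] A ⊗[k] H,
      (∀ x y : A, βbar (Submodule.Quotient.mk (x ⊗ₜ[k] y)) =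
        (TensorProduct.map (LinearMap.mul' k A) LinearMap.id)
          ((TensorProduct.assoc k A A H).symm
            (LinearMap.lTensor A ρ.toLinearMap (x ⊗ₜ[k] y)))) ∧
      Function.Bijective βbar) →
    -- conclusion: `A ⊗_B A ≅ A^n` as `A`-`B`-bimodules, `n = dim_k H`
    ∃ e : ((A ⊗[k] A) ⧸ rel) ≃ₗ[k] (Fin (Module.finrank k H) → A),
      ∀ (c x y : A), ∀ b ∈ Bset,
        e (Submodule.Quotient.mk ((c * x) ⊗ₜ[k] (y * b))) =
          fun i => c * (e (Submodule.Quotient.mk (x ⊗ₜ[k] y)) i) * b :=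
  hopf_galois_extension_is_depth_two_general k H A ρ
end

section
/- Let H be a semisimple Hopf algebra over an algebraically closed field of characteristic zero and K a normal Hopf subalgebra (i.e., a_{(1)} K S(a_{(2)}) ⊆ K for all a ∈ H). Then the two-sided integral Λ_K of K is central in H. -/
/-!
Write `a ▷ Λ = a₁ Λ S(a₂)`. Coassociativity and the antipode axiom give `a Λ = (a₁ ▷ Λ) a₂`;
normality puts `a₁ ▷ Λ` in `K`, where `Λ` absorbs it as the scalar `ε(a₁ ▷ Λ) = ε(a₁) ε(Λ)`.
Hence `Λ a Λ = ε(Λ) Λ a` for all `a`, so `u = aΛ - Λa` satisfies `u H u = 0`. In a semisimple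
ring this forces `u = 0`: the left ideal `H u` is generated by an idempotent `e = s u`, and then
`u = u e = u s u = 0`.
-/

open TensorProduct Coalgebra HopfAlgebra

theorem IsSemisimpleRing.eq_zero_of_forall_mul_mul_self_eq_zero {R : Type*} [Ring R]
    [IsSemisimpleRing R] {u : R} (h : ∀ x, u * x * u = 0) : u = 0 := by
  obtain ⟨e, he, hspan⟩ := IsSemisimpleRing.ideal_eq_span_idempotent (Ideal.span {u})
  obtain ⟨r, hr⟩ := Ideal.mem_span_singleton'.mp (hspan ▸ Ideal.mem_span_singleton_self u)
  obtain ⟨s, hs⟩ := Ideal.mem_span_singleton'.mp (hspan ▸ Ideal.mem_span_singleton_self e)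
  calc u = u * e := by rw [← hr, mul_assoc, he.eq]
    _ = 0 := by rw [← hs, ← mul_assoc, h]

namespace HopfAlgebra

variable {R A : Type*} [CommSemiring R] [Semiring A] [HopfAlgebra R A] {ι : Type*}

variable (R) in
noncomputable def adjointAction (a x : A) : A :=
  LinearMap.mul' R A (TensorProduct.map (LinearMap.mulRight R x) (antipode R) (comul a))

theorem adjointAction_eq_sum {a : A} (ρ : Repr R a ι) (x : A) :
    adjointAction R a x = ∑ i ∈ ρ.index, ρ.left i * x * antipode R (ρ.right i) := by
  simp [adjointAction, ← ρ.eq, map_sum]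

theorem counit_adjointAction (a x : A) :
    counit (R := R) (adjointAction R a x) = counit a * counit x := by
  have hε := congrArg (counit (R := R)) (sum_counit_smul (ℛ R a))
  simp only [map_sum, map_smul, smul_eq_mul] at hε
  simp only [adjointAction_eq_sum (ℛ R a), map_sum, Bialgebra.counit_mul, counit_antipode]
  rw [← hε, Finset.sum_mul]
  exact Finset.sum_congr rfl fun i _ => by ring

theorem sum_adjointAction_mul {a : A} (ρ : Repr R a ι) (x : A) :
    ∑ i ∈ ρ.index, adjointAction R (ρ.left i) x * ρ.right i = a * x := by
  let G : A ⊗[R] (A ⊗[R] A) →ₗ[R] A := LinearMap.mul' R A ∘ₗ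
    TensorProduct.map (LinearMap.mulRight R x) (LinearMap.mul' R A ∘ₗ map (antipode R) .id)
  have hcoassoc :=
    congrArg G (sum_tmul_tmul_eq ρ (fun i ↦ ℛ R (ρ.left i)) fun i ↦ ℛ R (ρ.right i))
  simp only [G, map_sum, LinearMap.comp_apply, map_tmul, LinearMap.mul'_apply,
    LinearMap.mulRight_apply, LinearMap.id_apply, ← Finset.mul_sum, sum_antipode_mul_eq_smul,
    mul_smul_one] at hcoassoc
  simp only [adjointAction_eq_sum (ℛ R _), Finset.sum_mul, mul_assoc] at hcoassoc ⊢
  have hρ : ∑ i ∈ ρ.index, counit (R := R) (ρ.right i) • ρ.left i = a := by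
    simpa only [map_sum, rid_tmul, one_smul] using
      congrArg (TensorProduct.rid R A) (sum_tmul_counit_eq ρ)
  rw [hcoassoc]
  conv_rhs => rw [← hρ, Finset.sum_mul]
  simp only [smul_mul_assoc]

theorem mul_mul_eq_counit_smul_mul {Λ : A}
    (hΛ : ∀ a, Λ * adjointAction R a Λ = counit (R := R) (adjointAction R a Λ) • Λ) (x : A) :
    Λ * x * Λ = counit (R := R) Λ • (Λ * x) := by
  calc Λ * x * Λ
      = ∑ i ∈ (ℛ R x).index, Λ * adjointAction R ((ℛ R x).left i) Λ * (ℛ R x).right i := by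
        rw [mul_assoc, ← sum_adjointAction_mul (ℛ R x), Finset.mul_sum]
        simp only [mul_assoc]
    _ = counit (R := R) Λ •
          (Λ * ∑ i ∈ (ℛ R x).index, counit (R := R) ((ℛ R x).left i) • (ℛ R x).right i) := by
        simp only [hΛ, counit_adjointAction, Finset.mul_sum, Finset.smul_sum, mul_smul_comm,
          smul_mul_assoc, smul_smul, mul_comm]
    _ = counit (R := R) Λ • (Λ * x) := by rw [sum_counit_smul]

end HopfAlgebra

theorem commute_of_forall_mul_mul_eq_smul_mul {R A : Type*} [CommSemiring R] [Ring A]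
    [Algebra R A] [IsSemisimpleRing A] {p : A} {c : R} (hp : ∀ x, p * x * p = c • (p * x)) (a : A) :
    Commute a p := by
  refine sub_eq_zero.mp (IsSemisimpleRing.eq_zero_of_forall_mul_mul_self_eq_zero fun z ↦ ?_)
  have h₁ : p * (z * (a * p)) = c • (p * (z * a)) := by
    simpa only [mul_assoc] using hp (z * a)
  have h₂ : p * (z * (p * a)) = c • (p * (z * a)) := by
    simpa only [mul_assoc, smul_mul_assoc] using congrArg (· * a) (hp z)
  have h₃ : p * (a * (z * (a * p))) = c • (p * (a * (z * a))) := by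
    simpa only [mul_assoc] using hp (a * z * a)
  have h₄ : p * (a * (z * (p * a))) = c • (p * (a * (z * a))) := by
    simpa only [mul_assoc, smul_mul_assoc] using congrArg (· * a) (hp (a * z))
  simp only [sub_mul, mul_sub, mul_assoc]
  rw [h₁, h₂, h₃, h₄, sub_self]

theorem normal_hopf_subalgebra_integral_central_general
    (k : Type*) [Field k]
    (H : Type*) [Ring H] [HopfAlgebra k H] [IsSemisimpleRing H]
    (K : Subalgebra k H)
    -- `K` is normal: invariance under the left adjoint action `a ▷ x = a₍₁₎ x S(a₍₂₎)`
    (hnormal : ∀ a : H, ∀ x ∈ K,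
      LinearMap.mul' k H
        ((TensorProduct.map (LinearMap.mulRight k x) (antipode (R := k)))
          (comul (R := k) a)) ∈ K)
    -- `Λ` is a nonzero two-sided integral of `K`, fixed by the antipode
    (Λ : H) (hΛK : Λ ∈ K)
    (hΛr : ∀ x ∈ K, Λ * x = (counit (R := k) x : k) • Λ) :
    ∀ a : H, a * Λ = Λ * a := fun a ↦
  (commute_of_forall_mul_mul_eq_smul_mul
    (mul_mul_eq_counit_smul_mul fun b ↦ hΛr _ (hnormal b Λ hΛK)) a).eq

/-- Let `H` be a semisimple Hopf algebra over an algebraically closed field of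
characteristic zero and `K` a normal Hopf subalgebra (`a₍₁₎ K S(a₍₂₎) ⊆ K` for all `a ∈ H`).
Then the two-sided integral `Λ_K` of `K` is central in `H`. -/
theorem normal_hopf_subalgebra_integral_central
    (k : Type*) [Field k] [IsAlgClosed k] [CharZero k]
    (H : Type*) [Ring H] [HopfAlgebra k H] [FiniteDimensional k H] [IsSemisimpleRing H]
    (K : Subalgebra k H)
    -- `K` is a Hopf subalgebra
    (hΔ : ∀ x ∈ K, comul (R := k) x ∈
      LinearMap.range (TensorProduct.map K.val.toLinearMap K.val.toLinearMap))
    (hSK : ∀ x ∈ K, antipode (R := k) x ∈ K)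
    -- `K` is normal: invariance under the left adjoint action `a ▷ x = a₍₁₎ x S(a₍₂₎)`
    (hnormal : ∀ a : H, ∀ x ∈ K,
      LinearMap.mul' k H
        ((TensorProduct.map (LinearMap.mulRight k x) (antipode (R := k)))
          (comul (R := k) a)) ∈ K)
    -- `Λ` is a nonzero two-sided integral of `K`, fixed by the antipode
    (Λ : H) (hΛK : Λ ∈ K) (hΛ0 : Λ ≠ 0)
    (hΛl : ∀ x ∈ K, x * Λ = (counit (R := k) x : k) • Λ)
    (hΛr : ∀ x ∈ K, Λ * x = (counit (R := k) x : k) • Λ)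
    (hSΛ : antipode (R := k) Λ = Λ) :
    ∀ a : H, a * Λ = Λ * a :=
  normal_hopf_subalgebra_integral_central_general k H K hnormal Λ hΛK hΛr
end

section
/- Let A|B be a Frobenius extension with Frobenius homomorphism E: A → B and dual bases {x_i}, {y_i}, and suppose A|B is left depth two with quasibases β_i ∈ End_{B-B}(A), t_i ∈ (A ⊗_B A)^B. Then the elements {t_i} and {Σ_j β_i(x_j) e_1 y_j} (all lying in T = (A ⊗_B A)^B) are dual bases for the Frobenius homomorphism E_A: A ⊗_B A → A, E_A(x e_1 y) = xy, where e_1 = 1 ⊗_B 1. -/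
/-!
A `B`-bimodule endomorphism `f` of `A` is recovered from its values on the dual basis,
`f a = Σ_j f(x_j) E(y_j a)`. Applied to `β_i` this collapses `E_A(β̃_i (x e₁ y))` to `β_i(x) y`,
so the dual bases equation for `E_A` is the left depth two quasibasis equation itself. Applied to
`a = b x_j`, together with `y_k b = Σ_j E(y_k b x_j) y_j`, it shows that `Σ_j f(x_j) ⊗ y_j`
commutes with every `b ∈ B` in `A ⊗_B A`.
-/

open TensorProduct

section FrobeniusSystem

variable {A : Type*} [Ring A]

/-- `A ⊗_B A` is `(A ⊗[ℤ] A) ⧸ balancingRel B`. -/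
def balancingRel (B : Subring A) : Submodule ℤ (A ⊗[ℤ] A) :=
  Submodule.span ℤ {z | ∃ (x y : A) (b : A), b ∈ B ∧ z = (x * b) ⊗ₜ[ℤ] y - x ⊗ₜ[ℤ] (b * y)}

variable (B : Subring A) (E : A →+ A) {m : ℕ} (xs ys : Fin m → A)

theorem mul_tmul_smodEq_tmul_mul {b : A} (hb : b ∈ B) (x y : A) :
    (x * b) ⊗ₜ[ℤ] y ≡ x ⊗ₜ[ℤ] (b * y) [SMOD balancingRel B] :=
  SModEq.sub_mem.mpr <| Submodule.subset_span ⟨x, y, b, hb, rfl⟩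

theorem sum_map_mul_E_eq_map (hEB : ∀ a, E a ∈ B)
    (hdual₁ : ∀ a : A, ∑ i, xs i * E (ys i * a) = a)
    (f : A →+ A) (hf : ∀ b ∈ B, ∀ a, f (a * b) = f a * b) (a : A) :
    ∑ j, f (xs j) * E (ys j * a) = f a := by
  simp_rw [← hf _ (hEB _), ← map_sum, hdual₁]

theorem sum_mul_map_tmul_smodEq (hEB : ∀ a, E a ∈ B)
    (hdual₁ : ∀ a : A, ∑ i, xs i * E (ys i * a) = a)
    (hdual₂ : ∀ a : A, ∑ i, E (a * xs i) * ys i = a)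
    (f : A →+ A) (hfl : ∀ b ∈ B, ∀ a, f (b * a) = b * f a)
    (hfr : ∀ b ∈ B, ∀ a, f (a * b) = f a * b) {b : A} (hb : b ∈ B) :
    ∑ j, (b * f (xs j)) ⊗ₜ[ℤ] ys j ≡ ∑ j, f (xs j) ⊗ₜ[ℤ] (ys j * b) [SMOD balancingRel B] :=
  calc ∑ j, (b * f (xs j)) ⊗ₜ[ℤ] ys j
      = ∑ j, ∑ k, (f (xs k) * E (ys k * b * xs j)) ⊗ₜ[ℤ] ys j := by
        refine Finset.sum_congr rfl fun j _ => ?_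
        simp_rw [← hfl b hb, ← sum_tmul, mul_assoc]
        rw [sum_map_mul_E_eq_map B E xs ys hEB hdual₁ f hfr]
    _ ≡ ∑ j, ∑ k, f (xs k) ⊗ₜ[ℤ] (E (ys k * b * xs j) * ys j) [SMOD balancingRel B] :=
        SModEq.sum fun j _ => SModEq.sum fun k _ => mul_tmul_smodEq_tmul_mul B (hEB _) _ _
    _ = ∑ j, f (xs j) ⊗ₜ[ℤ] (ys j * b) := by
        rw [Finset.sum_comm]
        simp_rw [← tmul_sum, hdual₂]

end FrobeniusSystem

theorem frobenius_d2_quasibases_give_dual_bases_for_EA_general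
    (A : Type*) [Ring A] (B : Subring A)
    (rel : Submodule ℤ (A ⊗[ℤ] A))
    (hrel : rel = Submodule.span ℤ {z | ∃ (x y : A) (b : A), b ∈ B ∧
      z = (x * b) ⊗ₜ[ℤ] y - x ⊗ₜ[ℤ] (b * y)})
    -- the Frobenius system `(E, x_i, y_i)`
    (E : A →+ A) (hEB : ∀ a, E a ∈ B)
    (m : ℕ) (xs ys : Fin m → A)
    (hdual₁ : ∀ a : A, ∑ i, xs i * E (ys i * a) = a)
    (hdual₂ : ∀ a : A, ∑ i, E (a * xs i) * ys i = a)
    -- a left depth two quasibasis `(β_i, t_i)`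
    (n : ℕ) (β : Fin n → (A →+ A)) (t : Fin n → A ⊗[ℤ] A)
    (hβ : ∀ (i : Fin n) (b b' : A), b ∈ B → b' ∈ B →
      ∀ a, β i (b * a * b') = b * β i a * b')
    (hqb : ∀ x y : A,
      x ⊗ₜ[ℤ] y - ∑ i, LinearMap.lTensor A (LinearMap.mulRight ℤ (β i x * y)) (t i) ∈ rel) :
    -- each `β̃_i = Σ_j β_i(x_j) ⊗_B y_j` lies in the centralizer `T = (A ⊗_B A)^B`
    (∀ (i : Fin n), ∀ b ∈ B,
      LinearMap.rTensor A (LinearMap.mulLeft ℤ b) (∑ j, β i (xs j) ⊗ₜ[ℤ] ys j)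
        - LinearMap.lTensor A (LinearMap.mulRight ℤ b) (∑ j, β i (xs j) ⊗ₜ[ℤ] ys j) ∈ rel) ∧
    -- dual bases equation for `E_A` on the generators `x e₁ y` of `A ⊗_B A`
    (∀ x y : A,
      (∑ i, LinearMap.lTensor A
          (LinearMap.mulRight ℤ (∑ j, β i (xs j) * E (ys j * x) * y)) (t i))
        - x ⊗ₜ[ℤ] y ∈ rel) := by
  subst hrel
  have hβl : ∀ i, ∀ b ∈ B, ∀ a, β i (b * a) = b * β i a := fun i b hb a => by
    simpa using hβ i b 1 hb B.one_mem a
  have hβr : ∀ i, ∀ b ∈ B, ∀ a, β i (a * b) = β i a * b := fun i b hb a => by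
    simpa using hβ i 1 b B.one_mem hb a
  refine ⟨fun i b hb => ?_, fun x y => ?_⟩
  · simp only [map_sum, LinearMap.rTensor_tmul, LinearMap.lTensor_tmul,
      LinearMap.mulLeft_apply, LinearMap.mulRight_apply]
    exact SModEq.sub_mem.mp <|
      sum_mul_map_tmul_smodEq B E xs ys hEB hdual₁ hdual₂ (β i) (hβl i) (hβr i) hb
  · simp_rw [← Finset.sum_mul, sum_map_mul_E_eq_map B E xs ys hEB hdual₁ (β _) (hβr _)]
    exact SModEq.sub_mem.mp (SModEq.sub_mem.mpr (hqb x y)).symm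

/-- Let `A|B` be a Frobenius extension with Frobenius homomorphism `E : A → B`
and dual bases `{x_i}, {y_i}`, and suppose `A|B` is left depth two with quasibases
`β_i ∈ End_{B-B}(A)`, `t_i ∈ (A ⊗_B A)^B`.  Then the elements `{t_i}` and
`{β̃_i = Σ_j β_i(x_j) e₁ y_j}` all lie in `T = (A ⊗_B A)^B` and are dual bases for the
Frobenius homomorphism `E_A : A ⊗_B A → A`, `E_A(x e₁ y) = xy`:
`Σ_i t_i E_A(β̃_i (x e₁ y)) = x e₁ y`, where
`E_A(β̃_i (x e₁ y)) = Σ_j β_i(x_j) E(y_j x) y`. -/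
theorem frobenius_d2_quasibases_give_dual_bases_for_EA
    (A : Type*) [Ring A] (B : Subring A)
    (rel : Submodule ℤ (A ⊗[ℤ] A))
    (hrel : rel = Submodule.span ℤ {z | ∃ (x y : A) (b : A), b ∈ B ∧
      z = (x * b) ⊗ₜ[ℤ] y - x ⊗ₜ[ℤ] (b * y)})
    -- the Frobenius system `(E, x_i, y_i)`
    (E : A →+ A) (hEB : ∀ a, E a ∈ B)
    (hEbimod : ∀ (b b' : A), b ∈ B → b' ∈ B → ∀ a, E (b * a * b') = b * E a * b')
    (m : ℕ) (xs ys : Fin m → A)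
    (hdual₁ : ∀ a : A, ∑ i, xs i * E (ys i * a) = a)
    (hdual₂ : ∀ a : A, ∑ i, E (a * xs i) * ys i = a)
    -- a left depth two quasibasis `(β_i, t_i)`
    (n : ℕ) (β : Fin n → (A →+ A)) (t : Fin n → A ⊗[ℤ] A)
    (hβ : ∀ (i : Fin n) (b b' : A), b ∈ B → b' ∈ B →
      ∀ a, β i (b * a * b') = b * β i a * b')
    (ht : ∀ (i : Fin n), ∀ b ∈ B,
      LinearMap.rTensor A (LinearMap.mulLeft ℤ b) (t i)
        - LinearMap.lTensor A (LinearMap.mulRight ℤ b) (t i) ∈ rel)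
    (hqb : ∀ x y : A,
      x ⊗ₜ[ℤ] y - ∑ i, LinearMap.lTensor A (LinearMap.mulRight ℤ (β i x * y)) (t i) ∈ rel) :
    -- each `β̃_i = Σ_j β_i(x_j) ⊗_B y_j` lies in the centralizer `T = (A ⊗_B A)^B`
    (∀ (i : Fin n), ∀ b ∈ B,
      LinearMap.rTensor A (LinearMap.mulLeft ℤ b) (∑ j, β i (xs j) ⊗ₜ[ℤ] ys j)
        - LinearMap.lTensor A (LinearMap.mulRight ℤ b) (∑ j, β i (xs j) ⊗ₜ[ℤ] ys j) ∈ rel) ∧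
    -- dual bases equation for `E_A` on the generators `x e₁ y` of `A ⊗_B A`
    (∀ x y : A,
      (∑ i, LinearMap.lTensor A
          (LinearMap.mulRight ℤ (∑ j, β i (xs j) * E (ys j * x) * y)) (t i))
        - x ⊗ₜ[ℤ] y ∈ rel) :=
  frobenius_d2_quasibases_give_dual_bases_for_EA_general A B rel hrel E hEB m xs ys hdual₁ hdual₂ n
    β t hβ hqb
end

section
/- In a weak Hopf algebra W, the antipode relates the projections by Π^L = S ∘ Π̄^L and Π^R = S ∘ Π̄^R, and moreover S̄(a_{(2)}) a_{(1)} = Π̄^R(a) and a_{(2)} S̄(a_{(1)}) = Π̄^L(a) for all a ∈ W, where S̄ is the inverse of S. -/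
/-!
Weak comultiplicativity of `Δ 1` gives `Δ(Π̄^L x) = (1 ⊗ Π̄^L x) Δ(1)` and
`Π^R(1₍₁₎) ⊗ 1₍₂₎ = Δ(1)`. Feeding both into `S = Π^R ⋆ S` yields `S(Π̄^L x) = Π^L(Π̄^L x)`,
which is `Π^L x` by weak multiplicativity of `ε`; `Π^R = S ∘ Π̄^R` is the mirror image, using
`S = S ⋆ Π^L`.

Since `S` is injective, the identities for `S̄` follow once `S` is anti-multiplicative:
`S(S̄(a₍₂₎) a₍₁₎) = S(a₍₁₎) a₍₂₎ = Π^R(a) = S(Π̄^R a)`. Anti-multiplicativity is proved as for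
Hopf algebras, with the projections absorbing the failure of `S` to be a convolution inverse:
expand `S(xy) = Π^R((xy)₍₁₎) S((xy)₍₂₎)`, pull `y` out with `Π^R(xy) = S(y₍₁₎) Π^R(x) y₍₂₎`,
collapse the rest with `x₍₁₎ Π^L(y) S(x₍₂₎) = Π^L(xy)`, and conclude with `S = Π^R ⋆ S = S ⋆ Π^L`
and the fact that the images of `Π^R` and `Π^L` commute.
-/

open TensorProduct

noncomputable section

variable (k : Type*) [Field k] (W : Type*) [Ring W] [Algebra k W]

/-- The target projection `Π^L(x) = ε(1₍₁₎ x) 1₍₂₎` of a weak bialgebra. -/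
def wPiL (Δ : W →ₗ[k] W ⊗[k] W) (ε : W →ₗ[k] k) (x : W) : W :=
  TensorProduct.lid k W (LinearMap.rTensor W (ε ∘ₗ LinearMap.mulRight k x) (Δ 1))

/-- The source projection `Π^R(x) = 1₍₁₎ ε(x 1₍₂₎)` of a weak bialgebra. -/
def wPiR (Δ : W →ₗ[k] W ⊗[k] W) (ε : W →ₗ[k] k) (x : W) : W :=
  TensorProduct.rid k W (LinearMap.lTensor W (ε ∘ₗ LinearMap.mulLeft k x) (Δ 1))

/-- The projection `Π̄^L(x) = 1₍₁₎ ε(1₍₂₎ x)` of a weak bialgebra. -/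
def wPiLbar (Δ : W →ₗ[k] W ⊗[k] W) (ε : W →ₗ[k] k) (x : W) : W :=
  TensorProduct.rid k W (LinearMap.lTensor W (ε ∘ₗ LinearMap.mulRight k x) (Δ 1))

/-- The projection `Π̄^R(x) = ε(x 1₍₁₎) 1₍₂₎` of a weak bialgebra. -/
def wPiRbar (Δ : W →ₗ[k] W ⊗[k] W) (ε : W →ₗ[k] k) (x : W) : W :=
  TensorProduct.lid k W (LinearMap.rTensor W (ε ∘ₗ LinearMap.mulLeft k x) (Δ 1))

section Sweedler

variable {R M N P : Type*} [CommSemiring R] [AddCommMonoid M] [AddCommMonoid N]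
  [AddCommMonoid P] [Module R M] [Module R N] [Module R P]

/-- A fixed choice of Sweedler representation `Δ w = ∑ w₍₁₎ ⊗ w₍₂₎`. Lemmas that must apply to
other representations take one as a hypothesis `∑ i ∈ s, a i ⊗ₜ b i = Δ w`. -/
def sweedler (Δ : M →ₗ[R] M ⊗[R] M) (w : M) : Finset (M × M) :=
  (exists_finset (Δ w)).choose

theorem sum_sweedler (Δ : M →ₗ[R] M ⊗[R] M) (w : M) :
    ∑ p ∈ sweedler Δ w, p.1 ⊗ₜ[R] p.2 = Δ w :=
  (exists_finset (Δ w)).choose_spec.symm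

theorem sum_bilin_eq_of_sum_tmul_eq {ι κ : Type*} {s : Finset ι} {t : Finset κ}
    {a : ι → M} {b : ι → N} {c : κ → M} {d : κ → N} (f : M →ₗ[R] N →ₗ[R] P)
    (h : ∑ i ∈ s, a i ⊗ₜ[R] b i = ∑ j ∈ t, c j ⊗ₜ[R] d j) :
    ∑ i ∈ s, f (a i) (b i) = ∑ j ∈ t, f (c j) (d j) := by
  simpa using congrArg (lift f) h

end Sweedler

namespace WeakHopf

variable {k W}

def Coassociative (Δ : W →ₗ[k] W ⊗[k] W) : Prop :=
  ∀ x : W, TensorProduct.assoc k W W W (LinearMap.rTensor W Δ (Δ x)) = LinearMap.lTensor W Δ (Δ x)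

def WeakComulUnit₁ (Δ : W →ₗ[k] W ⊗[k] W) : Prop :=
  LinearMap.rTensor W Δ (Δ 1)
    = (Δ 1 ⊗ₜ[k] (1 : W)) * ((TensorProduct.assoc k W W W).symm ((1 : W) ⊗ₜ[k] Δ 1))

def WeakComulUnit₂ (Δ : W →ₗ[k] W ⊗[k] W) : Prop :=
  LinearMap.rTensor W Δ (Δ 1)
    = ((TensorProduct.assoc k W W W).symm ((1 : W) ⊗ₜ[k] Δ 1)) * (Δ 1 ⊗ₜ[k] (1 : W))

def WeakCounitMul₁ (Δ : W →ₗ[k] W ⊗[k] W) (ε : W →ₗ[k] k) : Prop :=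
  ∀ a b c : W, ε (a * b * c) = TensorProduct.lid k k
    (TensorProduct.map (ε ∘ₗ LinearMap.mulLeft k a) (ε ∘ₗ LinearMap.mulRight k c) (Δ b))

def WeakCounitMul₂ (Δ : W →ₗ[k] W ⊗[k] W) (ε : W →ₗ[k] k) : Prop :=
  ∀ a b c : W, ε (a * b * c) = TensorProduct.lid k k
    (TensorProduct.map (ε ∘ₗ LinearMap.mulRight k c) (ε ∘ₗ LinearMap.mulLeft k a) (Δ b))

def AntipodeConvId (Δ : W →ₗ[k] W ⊗[k] W) (ε : W →ₗ[k] k) (S : W →ₗ[k] W) : Prop :=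
  ∀ x : W, LinearMap.mul' k W (LinearMap.rTensor W S (Δ x)) = wPiR k W Δ ε x

def IdConvAntipode (Δ : W →ₗ[k] W ⊗[k] W) (ε : W →ₗ[k] k) (S : W →ₗ[k] W) : Prop :=
  ∀ x : W, LinearMap.mul' k W (LinearMap.lTensor W S (Δ x)) = wPiL k W Δ ε x

def AntipodeConvIdConvAntipode (Δ : W →ₗ[k] W ⊗[k] W) (S : W →ₗ[k] W) : Prop :=
  ∀ x : W, LinearMap.mul' k W (TensorProduct.map (LinearMap.mul' k W ∘ₗ LinearMap.rTensor W S) S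
    (LinearMap.rTensor W Δ (Δ x))) = S x

variable {Δ : W →ₗ[k] W ⊗[k] W} {ε : W →ₗ[k] k} {S : W →ₗ[k] W}

local notation "Π^L" => wPiL k W Δ ε
local notation "Π^R" => wPiR k W Δ ε
local notation "Π̄^L" => wPiLbar k W Δ ε
local notation "Π̄^R" => wPiRbar k W Δ ε

theorem wPiL_eq_sum (x : W) : Π^L x = ∑ p ∈ sweedler Δ 1, ε (p.1 * x) • p.2 := by
  rw [wPiL, ← sum_sweedler Δ 1]
  simp

theorem wPiR_eq_sum (x : W) : Π^R x = ∑ p ∈ sweedler Δ 1, ε (x * p.2) • p.1 := by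
  rw [wPiR, ← sum_sweedler Δ 1]
  simp

theorem wPiLbar_eq_sum (x : W) : Π̄^L x = ∑ p ∈ sweedler Δ 1, ε (p.2 * x) • p.1 := by
  rw [wPiLbar, ← sum_sweedler Δ 1]
  simp

theorem wPiRbar_eq_sum (x : W) : Π̄^R x = ∑ p ∈ sweedler Δ 1, ε (x * p.1) • p.2 := by
  rw [wPiRbar, ← sum_sweedler Δ 1]
  simp

theorem sweedler_coassoc (hΔ : Coassociative Δ) (w : W) :
    ∑ p ∈ sweedler Δ w, ∑ q ∈ sweedler Δ p.1, q.1 ⊗ₜ[k] (q.2 ⊗ₜ[k] p.2)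
      = ∑ p ∈ sweedler Δ w, ∑ q ∈ sweedler Δ p.2, p.1 ⊗ₜ[k] (q.1 ⊗ₜ[k] q.2) := by
  have h := hΔ w
  rw [← sum_sweedler Δ w] at h
  simpa [← sum_sweedler Δ, sum_tmul, tmul_sum] using h

theorem sweedler_coassoc_mul (hΔ : Coassociative Δ) (F H : W →ₗ[k] W) (w : W) :
    ∑ p ∈ sweedler Δ w, ∑ q ∈ sweedler Δ p.1, F q.1 * q.2 * H p.2
      = ∑ p ∈ sweedler Δ w, ∑ q ∈ sweedler Δ p.2, F p.1 * q.1 * H q.2 := by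
  have h := congrArg (LinearMap.mul' k W ∘ₗ TensorProduct.map F
    (LinearMap.mul' k W ∘ₗ TensorProduct.map LinearMap.id H)) (sweedler_coassoc hΔ w)
  simpa [mul_assoc] using h

theorem counit_mul_eq_sum₁ (h : WeakCounitMul₁ Δ ε) (a c : W) :
    ε (a * c) = ∑ p ∈ sweedler Δ 1, ε (a * p.1) * ε (p.2 * c) := by
  simpa [← sum_sweedler Δ 1] using h a 1 c

theorem counit_mul_eq_sum₂ (h : WeakCounitMul₂ Δ ε) (a c : W) :
    ε (a * c) = ∑ p ∈ sweedler Δ 1, ε (a * p.2) * ε (p.1 * c) := by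
  simpa [← sum_sweedler Δ 1, mul_comm] using h a 1 c

theorem rTensor_comul_comul_one₁ (h : WeakComulUnit₁ Δ) :
    LinearMap.rTensor W Δ (Δ 1)
      = ∑ p ∈ sweedler Δ 1, (Δ 1 * ((1 : W) ⊗ₜ[k] p.1)) ⊗ₜ[k] p.2 := by
  rw [h]
  nth_rw 2 [← sum_sweedler Δ 1]
  simp [Finset.mul_sum, tmul_sum, Algebra.TensorProduct.tmul_mul_tmul]

theorem rTensor_comul_comul_one₂ (h : WeakComulUnit₂ Δ) :
    LinearMap.rTensor W Δ (Δ 1)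
      = ∑ p ∈ sweedler Δ 1, (((1 : W) ⊗ₜ[k] p.1) * Δ 1) ⊗ₜ[k] p.2 := by
  rw [h]
  nth_rw 1 [← sum_sweedler Δ 1]
  simp [Finset.sum_mul, tmul_sum, Algebra.TensorProduct.tmul_mul_tmul]

theorem lTensor_comul_comul_one₁ (hΔ : Coassociative Δ) (h : WeakComulUnit₁ Δ) :
    LinearMap.lTensor W Δ (Δ 1)
      = ∑ q ∈ sweedler Δ 1, q.1 ⊗ₜ[k] ((q.2 ⊗ₜ[k] (1 : W)) * Δ 1) := by
  rw [← hΔ, rTensor_comul_comul_one₁ h]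
  simp only [← sum_sweedler Δ 1, Finset.mul_sum, Finset.sum_mul, sum_tmul,
    tmul_sum, map_sum, Algebra.TensorProduct.tmul_mul_tmul]
  rw [Finset.sum_comm]
  simp

theorem lTensor_comul_comul_one₂ (hΔ : Coassociative Δ) (h : WeakComulUnit₂ Δ) :
    LinearMap.lTensor W Δ (Δ 1)
      = ∑ q ∈ sweedler Δ 1, q.1 ⊗ₜ[k] (Δ 1 * (q.2 ⊗ₜ[k] (1 : W))) := by
  rw [← hΔ, rTensor_comul_comul_one₂ h]
  simp only [← sum_sweedler Δ 1, Finset.mul_sum, Finset.sum_mul, sum_tmul,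
    tmul_sum, map_sum, Algebra.TensorProduct.tmul_mul_tmul]
  rw [Finset.sum_comm]
  simp

theorem sum_wPiR_tmul_eq_sum_tmul_wPiL :
    ∑ p ∈ sweedler Δ 1, Π^R p.1 ⊗ₜ[k] p.2 = ∑ q ∈ sweedler Δ 1, q.1 ⊗ₜ[k] Π^L q.2 := by
  simp only [wPiR_eq_sum, wPiL_eq_sum, sum_tmul, tmul_sum,
    smul_tmul', tmul_smul]
  exact Finset.sum_comm

theorem sum_tmul_wPiL (hΔ : Coassociative Δ) (h : WeakComulUnit₂ Δ)
    (hε : ∀ x : W, TensorProduct.lid k W (LinearMap.rTensor W ε (Δ x)) = x) :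
    ∑ q ∈ sweedler Δ 1, q.1 ⊗ₜ[k] Π^L q.2 = Δ 1 := by
  have hid : ((TensorProduct.lid k W).toLinearMap ∘ₗ LinearMap.rTensor W ε) ∘ₗ Δ
      = LinearMap.id := LinearMap.ext hε
  have := congrArg (LinearMap.lTensor W ((TensorProduct.lid k W).toLinearMap ∘ₗ
    LinearMap.rTensor W ε)) (lTensor_comul_comul_one₂ hΔ h)
  rw [← LinearMap.comp_apply, ← LinearMap.lTensor_comp, hid, LinearMap.lTensor_id,
    LinearMap.id_apply, map_sum] at this
  rw [this]
  refine Finset.sum_congr rfl fun q _ => ?_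
  rw [wPiL_eq_sum, ← sum_sweedler Δ 1]
  simp [Finset.sum_mul, Algebra.TensorProduct.tmul_mul_tmul]

theorem sum_wPiR_tmul (hΔ : Coassociative Δ) (h : WeakComulUnit₂ Δ)
    (hε : ∀ x : W, TensorProduct.lid k W (LinearMap.rTensor W ε (Δ x)) = x) :
    ∑ p ∈ sweedler Δ 1, Π^R p.1 ⊗ₜ[k] p.2 = Δ 1 := by
  rw [sum_wPiR_tmul_eq_sum_tmul_wPiL, sum_tmul_wPiL hΔ h hε]

theorem comul_wPiLbar (h : WeakComulUnit₂ Δ) (x : W) :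
    Δ (Π̄^L x) = ((1 : W) ⊗ₜ[k] Π̄^L x) * Δ 1 := by
  let ψ := (TensorProduct.rid k (W ⊗[k] W)).toLinearMap ∘ₗ
    LinearMap.lTensor (W ⊗[k] W) (ε ∘ₗ LinearMap.mulRight k x)
  calc Δ (Π̄^L x) = ∑ p ∈ sweedler Δ 1, ε (p.2 * x) • Δ p.1 := by simp [wPiLbar_eq_sum]
    _ = ψ (LinearMap.rTensor W Δ (Δ 1)) := by rw [← sum_sweedler Δ 1]; simp [ψ]
    _ = ∑ p ∈ sweedler Δ 1, ε (p.2 * x) • (((1 : W) ⊗ₜ[k] p.1) * Δ 1) := by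
      rw [rTensor_comul_comul_one₂ h]; simp [ψ]
    _ = ((1 : W) ⊗ₜ[k] Π̄^L x) * Δ 1 := by
      simp [wPiLbar_eq_sum, tmul_sum, Finset.sum_mul]

theorem comul_wPiRbar (hΔ : Coassociative Δ) (h : WeakComulUnit₁ Δ) (x : W) :
    Δ (Π̄^R x) = (Π̄^R x ⊗ₜ[k] (1 : W)) * Δ 1 := by
  let θ := (TensorProduct.lid k (W ⊗[k] W)).toLinearMap ∘ₗ
    LinearMap.rTensor (W ⊗[k] W) (ε ∘ₗ LinearMap.mulLeft k x)
  calc Δ (Π̄^R x) = ∑ p ∈ sweedler Δ 1, ε (x * p.1) • Δ p.2 := by simp [wPiRbar_eq_sum]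
    _ = θ (LinearMap.lTensor W Δ (Δ 1)) := by rw [← sum_sweedler Δ 1]; simp [θ]
    _ = ∑ p ∈ sweedler Δ 1, ε (x * p.1) • ((p.2 ⊗ₜ[k] (1 : W)) * Δ 1) := by
      rw [lTensor_comul_comul_one₁ hΔ h]; simp [θ]
    _ = (Π̄^R x ⊗ₜ[k] (1 : W)) * Δ 1 := by
      simp [wPiRbar_eq_sum, sum_tmul, Finset.sum_mul, ← smul_tmul']

theorem wPiL_wPiLbar (h : WeakCounitMul₁ Δ ε) (x : W) : Π^L (Π̄^L x) = Π^L x := by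
  rw [wPiL_eq_sum (Π̄^L x), wPiL_eq_sum x]
  refine Finset.sum_congr rfl fun p _ => ?_
  rw [counit_mul_eq_sum₁ h p.1 x, wPiLbar_eq_sum]
  simp only [Finset.mul_sum, mul_smul_comm, map_sum, map_smul, smul_eq_mul, mul_comm]

theorem wPiR_wPiRbar (h : WeakCounitMul₁ Δ ε) (x : W) : Π^R (Π̄^R x) = Π^R x := by
  rw [wPiR_eq_sum (Π̄^R x), wPiR_eq_sum x]
  refine Finset.sum_congr rfl fun p _ => ?_
  rw [counit_mul_eq_sum₁ h x p.2, wPiRbar_eq_sum]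
  simp only [Finset.sum_mul, smul_mul_assoc, map_sum, map_smul, smul_eq_mul]

theorem sum_antipode_mul_eq_wPiR (hS1 : AntipodeConvId Δ ε S)
    {ι : Type*} {s : Finset ι} {a b : ι → W} {w : W} (h : ∑ i ∈ s, a i ⊗ₜ[k] b i = Δ w) :
    ∑ i ∈ s, S (a i) * b i = Π^R w := by
  rw [← hS1 w, ← h]
  simp

theorem sum_mul_antipode_eq_wPiL (hS2 : IdConvAntipode Δ ε S)
    {ι : Type*} {s : Finset ι} {a b : ι → W} {w : W} (h : ∑ i ∈ s, a i ⊗ₜ[k] b i = Δ w) :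
    ∑ i ∈ s, a i * S (b i) = Π^L w := by
  rw [← hS2 w, ← h]
  simp

theorem sum_wPiR_mul_antipode (hS1 : AntipodeConvId Δ ε S) (hS3 : AntipodeConvIdConvAntipode Δ S)
    {ι : Type*} {s : Finset ι} {a b : ι → W} {w : W} (h : ∑ i ∈ s, a i ⊗ₜ[k] b i = Δ w) :
    ∑ i ∈ s, Π^R (a i) * S (b i) = S w := by
  have := sum_bilin_eq_of_sum_tmul_eq ((LinearMap.mul k W).compl₁₂
    (LinearMap.mul' k W ∘ₗ LinearMap.rTensor W S ∘ₗ Δ) S) (h.trans (sum_sweedler Δ w).symm)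
  simp only [LinearMap.compl₁₂_apply, LinearMap.comp_apply, hS1 _, LinearMap.mul_apply'] at this
  rw [this, ← hS3 w, ← sum_sweedler Δ w]
  simp [← hS1 _, ← sum_sweedler Δ, Finset.sum_mul]

theorem sum_wPiR_mul_eq (hΔ : Coassociative Δ) (hS1 : AntipodeConvId Δ ε S)
    (H : W →ₗ[k] W) (w : W) :
    ∑ p ∈ sweedler Δ w, Π^R p.1 * H p.2
      = ∑ p ∈ sweedler Δ w, ∑ q ∈ sweedler Δ p.2, S p.1 * q.1 * H q.2 := by
  rw [← sweedler_coassoc_mul hΔ S H w]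
  refine Finset.sum_congr rfl fun p _ => ?_
  rw [← sum_antipode_mul_eq_wPiR hS1 (sum_sweedler Δ p.1), Finset.sum_mul]

theorem sum_antipode_mul_wPiL (hΔ : Coassociative Δ) (hS1 : AntipodeConvId Δ ε S)
    (hS2 : IdConvAntipode Δ ε S) (hS3 : AntipodeConvIdConvAntipode Δ S)
    {ι : Type*} {s : Finset ι} {a b : ι → W} {w : W} (h : ∑ i ∈ s, a i ⊗ₜ[k] b i = Δ w) :
    ∑ i ∈ s, S (a i) * Π^L (b i) = S w := by
  have := sum_bilin_eq_of_sum_tmul_eq ((LinearMap.mul k W).compl₁₂ S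
    (LinearMap.mul' k W ∘ₗ LinearMap.lTensor W S ∘ₗ Δ)) (h.trans (sum_sweedler Δ w).symm)
  simp only [LinearMap.compl₁₂_apply, LinearMap.comp_apply, hS2 _, LinearMap.mul_apply'] at this
  calc ∑ i ∈ s, S (a i) * Π^L (b i)
      = ∑ p ∈ sweedler Δ w, ∑ q ∈ sweedler Δ p.2, S p.1 * q.1 * S q.2 := by
        rw [this]
        refine Finset.sum_congr rfl fun p _ => ?_
        simp [← sum_mul_antipode_eq_wPiL hS2 (sum_sweedler Δ p.2), Finset.mul_sum, mul_assoc]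
    _ = S w := by
        rw [← sum_wPiR_mul_eq hΔ hS1 S, sum_wPiR_mul_antipode hS1 hS3 (sum_sweedler Δ w)]

theorem wPiL_eq_antipode_wPiLbar (hΔ : Coassociative Δ) (h₂ : WeakComulUnit₂ Δ)
    (hε : ∀ x : W, TensorProduct.lid k W (LinearMap.rTensor W ε (Δ x)) = x)
    (hεm : WeakCounitMul₁ Δ ε) (hS1 : AntipodeConvId Δ ε S) (hS2 : IdConvAntipode Δ ε S)
    (hS3 : AntipodeConvIdConvAntipode Δ S) (x : W) :
    Π^L x = S (Π̄^L x) := by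
  set y := Π̄^L x
  have hy : ∑ p ∈ sweedler Δ 1, p.1 ⊗ₜ[k] (y * p.2) = Δ y := by
    rw [comul_wPiLbar h₂, ← sum_sweedler Δ 1]
    simp [y, Finset.mul_sum, Algebra.TensorProduct.tmul_mul_tmul]
  calc Π^L x = Π^L y := (wPiL_wPiLbar hεm x).symm
    _ = ∑ p ∈ sweedler Δ 1, p.1 * S (y * p.2) := (sum_mul_antipode_eq_wPiL hS2 hy).symm
    _ = ∑ p ∈ sweedler Δ 1, Π^R p.1 * S (y * p.2) := by
      simpa using (sum_bilin_eq_of_sum_tmul_eq ((LinearMap.mul k W).compl₂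
        (S ∘ₗ LinearMap.mulLeft k y)) ((sum_wPiR_tmul hΔ h₂ hε).trans (sum_sweedler Δ 1).symm)).symm
    _ = S y := sum_wPiR_mul_antipode hS1 hS3 hy

theorem wPiR_eq_antipode_wPiRbar (hΔ : Coassociative Δ) (h₁ : WeakComulUnit₁ Δ)
    (h₂ : WeakComulUnit₂ Δ) (hε : ∀ x : W, TensorProduct.lid k W (LinearMap.rTensor W ε (Δ x)) = x)
    (hεm : WeakCounitMul₁ Δ ε) (hS1 : AntipodeConvId Δ ε S) (hS2 : IdConvAntipode Δ ε S)
    (hS3 : AntipodeConvIdConvAntipode Δ S) (x : W) :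
    Π^R x = S (Π̄^R x) := by
  set y := Π̄^R x
  have hy : ∑ p ∈ sweedler Δ 1, (y * p.1) ⊗ₜ[k] p.2 = Δ y := by
    rw [comul_wPiRbar hΔ h₁, ← sum_sweedler Δ 1]
    simp [y, Finset.mul_sum, Algebra.TensorProduct.tmul_mul_tmul]
  calc Π^R x = Π^R y := (wPiR_wPiRbar hεm x).symm
    _ = ∑ p ∈ sweedler Δ 1, S (y * p.1) * p.2 := (sum_antipode_mul_eq_wPiR hS1 hy).symm
    _ = ∑ p ∈ sweedler Δ 1, S (y * p.1) * Π^L p.2 := by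
      simpa using (sum_bilin_eq_of_sum_tmul_eq ((LinearMap.mul k W).compl₁₂
        (S ∘ₗ LinearMap.mulLeft k y) LinearMap.id)
          ((sum_tmul_wPiL hΔ h₂ hε).trans (sum_sweedler Δ 1).symm)).symm
    _ = S y := sum_antipode_mul_wPiL hΔ hS1 hS2 hS3 hy

theorem sum_sweedler_mul (hΔm : ∀ a b : W, Δ (a * b) = Δ a * Δ b) (x y : W) :
    ∑ i ∈ sweedler Δ x ×ˢ sweedler Δ y, (i.1.1 * i.2.1) ⊗ₜ[k] (i.1.2 * i.2.2) = Δ (x * y) := by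
  rw [hΔm, ← sum_sweedler Δ x, ← sum_sweedler Δ y, Finset.sum_mul_sum, Finset.sum_product]
  simp [Algebra.TensorProduct.tmul_mul_tmul]

theorem sum_comul_mul_tmul (h₂ : WeakComulUnit₂ Δ) (hΔm : ∀ a b : W, Δ (a * b) = Δ a * Δ b)
    (y : W) :
    ∑ q ∈ sweedler Δ 1, (((1 : W) ⊗ₜ[k] q.1) * Δ y) ⊗ₜ[k] q.2
      = ∑ q ∈ sweedler Δ 1, Δ (q.1 * y) ⊗ₜ[k] q.2 := by
  calc ∑ q ∈ sweedler Δ 1, (((1 : W) ⊗ₜ[k] q.1) * Δ y) ⊗ₜ[k] q.2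
      = LinearMap.rTensor W (LinearMap.mulRight k (Δ y))
          (∑ q ∈ sweedler Δ 1, (((1 : W) ⊗ₜ[k] q.1) * Δ 1) ⊗ₜ[k] q.2) := by
        simp [mul_assoc, ← hΔm]
    _ = LinearMap.rTensor W (LinearMap.mulRight k (Δ y)) (LinearMap.rTensor W Δ (Δ 1)) := by
        rw [rTensor_comul_comul_one₂ h₂]
    _ = ∑ q ∈ sweedler Δ 1, Δ (q.1 * y) ⊗ₜ[k] q.2 := by
        rw [← sum_sweedler Δ 1]
        simp [hΔm]

theorem sum_tmul_comul_mul (hΔ : Coassociative Δ) (h₂ : WeakComulUnit₂ Δ)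
    (hΔm : ∀ a b : W, Δ (a * b) = Δ a * Δ b) (x : W) :
    ∑ q ∈ sweedler Δ 1, q.1 ⊗ₜ[k] (Δ x * (q.2 ⊗ₜ[k] (1 : W)))
      = ∑ q ∈ sweedler Δ 1, q.1 ⊗ₜ[k] Δ (x * q.2) := by
  calc ∑ q ∈ sweedler Δ 1, q.1 ⊗ₜ[k] (Δ x * (q.2 ⊗ₜ[k] (1 : W)))
      = LinearMap.lTensor W (LinearMap.mulLeft k (Δ x))
          (∑ q ∈ sweedler Δ 1, q.1 ⊗ₜ[k] (Δ 1 * (q.2 ⊗ₜ[k] (1 : W)))) := by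
        simp [← mul_assoc, ← hΔm]
    _ = LinearMap.lTensor W (LinearMap.mulLeft k (Δ x)) (LinearMap.lTensor W Δ (Δ 1)) := by
        rw [lTensor_comul_comul_one₂ hΔ h₂]
    _ = ∑ q ∈ sweedler Δ 1, q.1 ⊗ₜ[k] Δ (x * q.2) := by
        rw [← sum_sweedler Δ 1]
        simp [hΔm]

theorem sum_counit_smul_wPiL (h : WeakCounitMul₂ Δ ε) (x y : W) :
    ∑ q ∈ sweedler Δ 1, ε (q.1 * y) • Π^L (x * q.2) = Π^L (x * y) := by
  simp only [wPiL_eq_sum, Finset.smul_sum, smul_smul]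
  rw [Finset.sum_comm]
  refine Finset.sum_congr rfl fun p _ => ?_
  rw [← Finset.sum_smul, ← mul_assoc, counit_mul_eq_sum₂ h (p.1 * x) y]
  simp only [mul_assoc, mul_comm]

theorem sum_counit_smul_wPiR (h : WeakCounitMul₂ Δ ε) (x y : W) :
    ∑ q ∈ sweedler Δ 1, ε (x * q.2) • Π^R (q.1 * y) = Π^R (x * y) := by
  simp only [wPiR_eq_sum, Finset.smul_sum, smul_smul]
  rw [Finset.sum_comm]
  refine Finset.sum_congr rfl fun p _ => ?_
  rw [← Finset.sum_smul, mul_assoc, counit_mul_eq_sum₂ h x (y * p.2)]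
  simp only [mul_assoc]

theorem sum_mul_wPiL_mul_antipode (hΔ : Coassociative Δ) (h₂ : WeakComulUnit₂ Δ)
    (hΔm : ∀ a b : W, Δ (a * b) = Δ a * Δ b) (hεm : WeakCounitMul₂ Δ ε)
    (hS2 : IdConvAntipode Δ ε S) (x y : W) :
    ∑ p ∈ sweedler Δ x, p.1 * Π^L y * S p.2 = Π^L (x * y) := by
  let Φ := (TensorProduct.lid k W).toLinearMap ∘ₗ
    TensorProduct.map (ε ∘ₗ LinearMap.mulRight k y) (LinearMap.mul' k W ∘ₗ LinearMap.lTensor W S)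
  calc ∑ p ∈ sweedler Δ x, p.1 * Π^L y * S p.2
      = Φ (∑ q ∈ sweedler Δ 1, q.1 ⊗ₜ[k] (Δ x * (q.2 ⊗ₜ[k] (1 : W)))) := by
        rw [wPiL_eq_sum y, ← sum_sweedler Δ x]
        simp [Φ, Finset.mul_sum, Finset.sum_mul, Finset.smul_sum,
          Algebra.TensorProduct.tmul_mul_tmul]
        exact Finset.sum_comm
    _ = ∑ q ∈ sweedler Δ 1, ε (q.1 * y) • Π^L (x * q.2) := by
        rw [sum_tmul_comul_mul hΔ h₂ hΔm]
        simp [Φ, hS2 _]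
    _ = Π^L (x * y) := sum_counit_smul_wPiL hεm x y

theorem sum_antipode_mul_wPiR_mul (h₂ : WeakComulUnit₂ Δ)
    (hΔm : ∀ a b : W, Δ (a * b) = Δ a * Δ b) (hεm : WeakCounitMul₂ Δ ε)
    (hS1 : AntipodeConvId Δ ε S) (x y : W) :
    ∑ p ∈ sweedler Δ y, S p.1 * Π^R x * p.2 = Π^R (x * y) := by
  let Φ := (TensorProduct.rid k W).toLinearMap ∘ₗ
    TensorProduct.map (LinearMap.mul' k W ∘ₗ LinearMap.rTensor W S) (ε ∘ₗ LinearMap.mulLeft k x)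
  calc ∑ p ∈ sweedler Δ y, S p.1 * Π^R x * p.2
      = Φ (∑ q ∈ sweedler Δ 1, (((1 : W) ⊗ₜ[k] q.1) * Δ y) ⊗ₜ[k] q.2) := by
        rw [wPiR_eq_sum x, ← sum_sweedler Δ y]
        simp [Φ, Finset.mul_sum, Finset.sum_mul, Finset.smul_sum,
          Algebra.TensorProduct.tmul_mul_tmul, mul_assoc]
        exact Finset.sum_comm
    _ = ∑ q ∈ sweedler Δ 1, ε (x * q.2) • Π^R (q.1 * y) := by
        rw [sum_comul_mul_tmul h₂ hΔm]
        simp [Φ, hS1 _]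
    _ = Π^R (x * y) := sum_counit_smul_wPiR hεm x y

theorem wPiR_mul_wPiL_comm (h₁ : WeakComulUnit₁ Δ) (h₂ : WeakComulUnit₂ Δ) (a b : W) :
    Π^R a * Π^L b = Π^L b * Π^R a := by
  let Ω := (TensorProduct.rid k W).toLinearMap ∘ₗ TensorProduct.map
    ((TensorProduct.lid k W).toLinearMap ∘ₗ LinearMap.rTensor W (ε ∘ₗ LinearMap.mulRight k b))
    (ε ∘ₗ LinearMap.mulLeft k a)
  calc Π^R a * Π^L b = Ω (LinearMap.rTensor W Δ (Δ 1)) := by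
        rw [rTensor_comul_comul_one₂ h₂, ← sum_sweedler Δ 1]
        simp [Ω, wPiR_eq_sum, wPiL_eq_sum, Finset.mul_sum, Finset.sum_mul, Finset.smul_sum,
          Algebra.TensorProduct.tmul_mul_tmul, smul_smul]
        rw [Finset.sum_comm]
        simp only [mul_comm]
    _ = Π^L b * Π^R a := by
        rw [rTensor_comul_comul_one₁ h₁, ← sum_sweedler Δ 1]
        simp [Ω, wPiR_eq_sum, wPiL_eq_sum, Finset.mul_sum, Finset.sum_mul, Finset.smul_sum,
          Algebra.TensorProduct.tmul_mul_tmul, smul_smul]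

theorem sum_antipode_mul_wPiL_mul (hΔ : Coassociative Δ) (h₁ : WeakComulUnit₁ Δ)
    (h₂ : WeakComulUnit₂ Δ) (hΔm : ∀ a b : W, Δ (a * b) = Δ a * Δ b) (hεm : WeakCounitMul₂ Δ ε)
    (hS1 : AntipodeConvId Δ ε S) (hS2 : IdConvAntipode Δ ε S)
    (hS3 : AntipodeConvIdConvAntipode Δ S) (x y : W) :
    ∑ p ∈ sweedler Δ x, S p.1 * Π^L (p.2 * y) = Π^L y * S x := by
  calc ∑ p ∈ sweedler Δ x, S p.1 * Π^L (p.2 * y)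
      = ∑ p ∈ sweedler Δ x, ∑ r ∈ sweedler Δ p.2, S p.1 * r.1 * (Π^L y * S r.2) := by
        refine Finset.sum_congr rfl fun p _ => ?_
        rw [← sum_mul_wPiL_mul_antipode hΔ h₂ hΔm hεm hS2, Finset.mul_sum]
        simp only [mul_assoc]
    _ = ∑ p ∈ sweedler Δ x, Π^R p.1 * (Π^L y * S p.2) :=
        (sum_wPiR_mul_eq hΔ hS1 (LinearMap.mulLeft k (Π^L y) ∘ₗ S) x).symm
    _ = Π^L y * S x := by
        simp only [← mul_assoc, wPiR_mul_wPiL_comm h₁ h₂]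
        simp only [mul_assoc, ← Finset.mul_sum, sum_wPiR_mul_antipode hS1 hS3 (sum_sweedler Δ x)]

theorem sum_antipode_mul_antipode_mul_wPiL (hΔ : Coassociative Δ) (h₁ : WeakComulUnit₁ Δ)
    (h₂ : WeakComulUnit₂ Δ) (hΔm : ∀ a b : W, Δ (a * b) = Δ a * Δ b) (hεm : WeakCounitMul₂ Δ ε)
    (hS1 : AntipodeConvId Δ ε S) (hS2 : IdConvAntipode Δ ε S)
    (hS3 : AntipodeConvIdConvAntipode Δ S) (x y : W) :
    ∑ q ∈ sweedler Δ y, ∑ p ∈ sweedler Δ x, S q.1 * S p.1 * Π^L (p.2 * q.2) = S y * S x := by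
  simp only [mul_assoc, ← Finset.mul_sum,
    sum_antipode_mul_wPiL_mul hΔ h₁ h₂ hΔm hεm hS1 hS2 hS3]
  simp only [← mul_assoc, ← Finset.sum_mul, sum_antipode_mul_wPiL hΔ hS1 hS2 hS3 (sum_sweedler Δ y)]

theorem sum_wPiR_mul_mul_eq (hΔ : Coassociative Δ) (h₂ : WeakComulUnit₂ Δ)
    (hΔm : ∀ a b : W, Δ (a * b) = Δ a * Δ b) (hεm : WeakCounitMul₂ Δ ε) (hS1 : AntipodeConvId Δ ε S)
    (z : W) (H : W →ₗ[k] W) (y : W) :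
    ∑ q ∈ sweedler Δ y, Π^R (z * q.1) * H q.2
      = ∑ q ∈ sweedler Δ y, ∑ t ∈ sweedler Δ q.2, S q.1 * Π^R z * t.1 * H t.2 := by
  have := sweedler_coassoc_mul hΔ (LinearMap.mulRight k (Π^R z) ∘ₗ S) H y
  simp only [LinearMap.comp_apply, LinearMap.mulRight_apply] at this
  rw [← this]
  refine Finset.sum_congr rfl fun q _ => ?_
  rw [← sum_antipode_mul_wPiR_mul h₂ hΔm hεm hS1 z q.1, Finset.sum_mul]

theorem antipode_mul (hΔ : Coassociative Δ) (h₁ : WeakComulUnit₁ Δ)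
    (h₂ : WeakComulUnit₂ Δ) (hΔm : ∀ a b : W, Δ (a * b) = Δ a * Δ b) (hεm : WeakCounitMul₂ Δ ε)
    (hS1 : AntipodeConvId Δ ε S) (hS2 : IdConvAntipode Δ ε S)
    (hS3 : AntipodeConvIdConvAntipode Δ S) (x y : W) :
    S (x * y) = S y * S x := by
  calc S (x * y)
      = ∑ p ∈ sweedler Δ x, ∑ q ∈ sweedler Δ y, Π^R (p.1 * q.1) * S (p.2 * q.2) := by
        rw [← sum_wPiR_mul_antipode hS1 hS3 (sum_sweedler_mul hΔm x y), Finset.sum_product]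
    _ = ∑ p ∈ sweedler Δ x, ∑ q ∈ sweedler Δ y, ∑ t ∈ sweedler Δ q.2,
          S q.1 * Π^R p.1 * t.1 * S (p.2 * t.2) :=
        Finset.sum_congr rfl fun p _ =>
          sum_wPiR_mul_mul_eq hΔ h₂ hΔm hεm hS1 p.1 (S ∘ₗ LinearMap.mulLeft k p.2) y
    _ = ∑ q ∈ sweedler Δ y, ∑ t ∈ sweedler Δ q.2, S q.1 *
          ∑ p ∈ sweedler Δ x, Π^R p.1 * (t.1 * S (p.2 * t.2)) := by
        rw [Finset.sum_comm]
        refine Finset.sum_congr rfl fun q _ => ?_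
        rw [Finset.sum_comm]
        simp only [Finset.mul_sum, mul_assoc]
    _ = ∑ q ∈ sweedler Δ y, ∑ t ∈ sweedler Δ q.2, S q.1 * ∑ p ∈ sweedler Δ x,
          ∑ r ∈ sweedler Δ p.2, S p.1 * r.1 * (t.1 * S (r.2 * t.2)) := by
        refine Finset.sum_congr rfl fun q _ => Finset.sum_congr rfl fun t _ => ?_
        exact congrArg (S q.1 * ·) (sum_wPiR_mul_eq hΔ hS1
          (LinearMap.mulLeft k t.1 ∘ₗ S ∘ₗ LinearMap.mulRight k t.2) x)
    _ = ∑ q ∈ sweedler Δ y, ∑ p ∈ sweedler Δ x, S q.1 * S p.1 *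
          ∑ r ∈ sweedler Δ p.2, ∑ t ∈ sweedler Δ q.2, r.1 * t.1 * S (r.2 * t.2) := by
        refine Finset.sum_congr rfl fun q _ => ?_
        simp only [Finset.mul_sum, mul_assoc]
        rw [Finset.sum_comm]
        exact Finset.sum_congr rfl fun p _ => Finset.sum_comm
    _ = ∑ q ∈ sweedler Δ y, ∑ p ∈ sweedler Δ x, S q.1 * S p.1 * Π^L (p.2 * q.2) := by
        refine Finset.sum_congr rfl fun q _ => Finset.sum_congr rfl fun p _ => ?_
        rw [← sum_mul_antipode_eq_wPiL hS2 (sum_sweedler_mul hΔm p.2 q.2), Finset.sum_product]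
    _ = S y * S x := sum_antipode_mul_antipode_mul_wPiL hΔ h₁ h₂ hΔm hεm hS1 hS2 hS3 x y

theorem mul'_rTensor_comm_comul_eq_wPiRbar (hS : ∀ x y : W, S (x * y) = S y * S x)
    (hS1 : AntipodeConvId Δ ε S) (hR : ∀ x : W, Π^R x = S (Π̄^R x)) {S' : W →ₗ[k] W}
    (hS'₁ : Function.LeftInverse S' S) (hS'₂ : Function.RightInverse S' S) (a : W) :
    LinearMap.mul' k W (LinearMap.rTensor W S' (TensorProduct.comm k W W (Δ a))) = Π̄^R a := by
  apply hS'₁.injective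
  rw [← hR, ← sum_antipode_mul_eq_wPiR hS1 (sum_sweedler Δ a), ← sum_sweedler Δ a]
  simp [hS, hS'₂ _]

theorem mul'_lTensor_comm_comul_eq_wPiLbar (hS : ∀ x y : W, S (x * y) = S y * S x)
    (hS2 : IdConvAntipode Δ ε S) (hL : ∀ x : W, Π^L x = S (Π̄^L x)) {S' : W →ₗ[k] W}
    (hS'₁ : Function.LeftInverse S' S) (hS'₂ : Function.RightInverse S' S) (a : W) :
    LinearMap.mul' k W (LinearMap.lTensor W S' (TensorProduct.comm k W W (Δ a))) = Π̄^L a := by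
  apply hS'₁.injective
  rw [← hL, ← sum_mul_antipode_eq_wPiL hS2 (sum_sweedler Δ a), ← sum_sweedler Δ a]
  simp [hS, hS'₂ _]

end WeakHopf

theorem weak_hopf_algebra_antipode_projection_identities
    (Δ : W →ₗ[k] W ⊗[k] W) (ε : W →ₗ[k] k) (S Sbar : W →ₗ[k] W)
    -- coalgebra axioms
    (hcoassoc : ∀ x : W,
      TensorProduct.assoc k W W W (LinearMap.rTensor W Δ (Δ x)) = LinearMap.lTensor W Δ (Δ x))
    (hcounitl : ∀ x : W, TensorProduct.lid k W (LinearMap.rTensor W ε (Δ x)) = x)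
    -- `Δ` is multiplicative
    (hΔmul : ∀ a b : W, Δ (a * b) = Δ a * Δ b)
    -- weak comultiplicativity of the unit:
    -- `Δ²(1) = (Δ(1) ⊗ 1)(1 ⊗ Δ(1)) = (1 ⊗ Δ(1))(Δ(1) ⊗ 1)`
    (hweakunit :
      LinearMap.rTensor W Δ (Δ 1)
          = (Δ 1 ⊗ₜ[k] (1 : W)) * ((TensorProduct.assoc k W W W).symm ((1 : W) ⊗ₜ[k] Δ 1)) ∧
      LinearMap.rTensor W Δ (Δ 1)
          = ((TensorProduct.assoc k W W W).symm ((1 : W) ⊗ₜ[k] Δ 1)) * (Δ 1 ⊗ₜ[k] (1 : W)))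
    -- weak multiplicativity of the counit:
    -- `ε(abc) = ε(a b₍₁₎) ε(b₍₂₎ c) = ε(a b₍₂₎) ε(b₍₁₎ c)`
    (hweakcounit : ∀ a b c : W,
      ε (a * b * c)
          = TensorProduct.lid k k
              (TensorProduct.map (ε ∘ₗ LinearMap.mulLeft k a) (ε ∘ₗ LinearMap.mulRight k c)
                (Δ b)) ∧
      ε (a * b * c)
          = TensorProduct.lid k k
              (TensorProduct.map (ε ∘ₗ LinearMap.mulRight k c) (ε ∘ₗ LinearMap.mulLeft k a)
                (Δ b)))
    -- antipode axioms: `S(x₍₁₎)x₍₂₎ = Π^R(x)`, `x₍₁₎S(x₍₂₎) = Π^L(x)`,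
    -- `S(x₍₁₎)x₍₂₎S(x₍₃₎) = S(x)`
    (hS1 : ∀ x : W, LinearMap.mul' k W (LinearMap.rTensor W S (Δ x)) = wPiR k W Δ ε x)
    (hS2 : ∀ x : W, LinearMap.mul' k W (LinearMap.lTensor W S (Δ x)) = wPiL k W Δ ε x)
    (hS3 : ∀ x : W,
      LinearMap.mul' k W
        (TensorProduct.map (LinearMap.mul' k W ∘ₗ LinearMap.rTensor W S) S
          (LinearMap.rTensor W Δ (Δ x))) = S x)
    -- `S` is bijective with inverse `S̄`
    (hSbar₁ : Function.LeftInverse Sbar S) (hSbar₂ : Function.RightInverse Sbar S) :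
    (∀ x : W, wPiL k W Δ ε x = S (wPiLbar k W Δ ε x)) ∧
    (∀ x : W, wPiR k W Δ ε x = S (wPiRbar k W Δ ε x)) ∧
    (∀ a : W, LinearMap.mul' k W
        (LinearMap.rTensor W Sbar (TensorProduct.comm k W W (Δ a))) = wPiRbar k W Δ ε a) ∧
    (∀ a : W, LinearMap.mul' k W
        (LinearMap.lTensor W Sbar (TensorProduct.comm k W W (Δ a))) = wPiLbar k W Δ ε a) := by
  have hεm₁ : WeakHopf.WeakCounitMul₁ Δ ε := fun a b c => (hweakcounit a b c).1
  have hεm₂ : WeakHopf.WeakCounitMul₂ Δ ε := fun a b c => (hweakcounit a b c).2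
  have hS := WeakHopf.antipode_mul hcoassoc hweakunit.1 hweakunit.2 hΔmul hεm₂ hS1 hS2 hS3
  have hL := WeakHopf.wPiL_eq_antipode_wPiLbar hcoassoc hweakunit.2 hcounitl hεm₁ hS1 hS2 hS3
  have hR := WeakHopf.wPiR_eq_antipode_wPiRbar hcoassoc hweakunit.1 hweakunit.2 hcounitl hεm₁
    hS1 hS2 hS3
  exact ⟨hL, hR, WeakHopf.mul'_rTensor_comm_comul_eq_wPiRbar hS hS1 hR hSbar₁ hSbar₂,
    WeakHopf.mul'_lTensor_comm_comul_eq_wPiLbar hS hS2 hL hSbar₁ hSbar₂⟩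

end
end

section
/- Let K be a normal Hopf subalgebra of a finite dimensional Hopf algebra H over a field, with n = dim H/dim K, and let Λ_H be a nonzero two-sided integral of H. Then the Schneider canonical isomorphism β̄: H ⊗_K H → H ⊗ (H/K⁺H), a ⊗_K b ↦ a b_{(1)} ⊗ (b_{(2)} mod K⁺H), sends Λ_H ⊗_K a to Λ_H ⊗ (a mod K⁺H); consequently if H ≅ K^n as left K-modules then dim(H/K⁺H) = n. -/
/-!
Since `Λ` is a right integral, `Λ a₍₁₎ ⊗ ā₍₂₎ = Λ ⊗ ε(a₍₁₎) ā₍₂₎ = Λ ⊗ ā`.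
For the dimension, a basis of `H` as a free left `K`-module of rank `n` identifies `H ⊗_K H`
with `Hⁿ`, so the isomorphism `β̄` gives `n · dim H = dim H · dim (H/K⁺H)`, and `dim H ≠ 0`.
-/

open TensorProduct Coalgebra HopfAlgebra

theorem Coalgebra.map_mulLeft_comul_of_mul_eq_counit_smul {R A M : Type*} [CommSemiring R]
    [Semiring A] [Algebra R A] [Coalgebra R A] [AddCommMonoid M] [Module R M]
    {Λ : A} (hΛ : ∀ a : A, Λ * a = counit (R := R) a • Λ) (f : A →ₗ[R] M) (a : A) :
    map (LinearMap.mulLeft R Λ) f (comul a) = Λ ⊗ₜ f a := by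
  have hmul : LinearMap.mulLeft R Λ = LinearMap.toSpanSingleton R A Λ ∘ₗ counit := by
    ext x
    simp [hΛ x]
  rw [hmul, ← LinearMap.map_rTensor, rTensor_counit_comul, map_tmul,
    LinearMap.toSpanSingleton_apply, one_smul]

namespace Subalgebra

variable {k A N ι : Type*} [CommRing k] [Ring A] [Algebra k A] (B : Subalgebra k A)
  [AddCommGroup N] [Module k N] [Module B N]

variable (N) in
/-- The quotient of `A ⊗[k] N` by this submodule is the balanced tensor product `A ⊗_B N`. -/
def balancingRel : Submodule k (A ⊗[k] N) :=
  Submodule.span k {z | ∃ (x : A) (b : B) (y : N), z = (x * b) ⊗ₜ y - x ⊗ₜ (b • y)}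

variable {B}

theorem mk_mul_tmul_eq_mk_tmul_smul (x : A) (b : B) (y : N) :
    (Submodule.Quotient.mk ((x * b) ⊗ₜ y) : A ⊗[k] N ⧸ B.balancingRel N) =
      Submodule.Quotient.mk (x ⊗ₜ (b • y)) :=
  (Submodule.Quotient.eq _).2 (Submodule.subset_span ⟨x, b, y, rfl⟩)

noncomputable def sumTmulBasis [Fintype ι] (b : Module.Basis ι B N) :
    (ι → A) →ₗ[k] A ⊗[k] N ⧸ B.balancingRel N :=
  ∑ i, (B.balancingRel N).mkQ ∘ₗ (TensorProduct.mk k A N).flip (b i) ∘ₗ LinearMap.proj i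

@[simp]
theorem sumTmulBasis_apply [Fintype ι] (b : Module.Basis ι B N) (f : ι → A) :
    sumTmulBasis b f = ∑ i, Submodule.Quotient.mk (f i ⊗ₜ b i) := by
  simp [sumTmulBasis, LinearMap.sum_apply]

variable [IsScalarTower k B N]

noncomputable def mulRepr (b : Module.Basis ι B N) : A ⊗[k] N →ₗ[k] (ι → A) :=
  LinearMap.pi fun i =>
    LinearMap.mul' k A ∘ₗ LinearMap.lTensor A (B.val.toLinearMap ∘ₗ (b.coord i).restrictScalars k)

@[simp]
theorem mulRepr_tmul (b : Module.Basis ι B N) (x : A) (y : N) (i : ι) :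
    mulRepr b (x ⊗ₜ y) i = x * b.repr y i := rfl

theorem balancingRel_le_ker_mulRepr (b : Module.Basis ι B N) :
    B.balancingRel N ≤ LinearMap.ker (mulRepr b) := by
  rw [balancingRel, Submodule.span_le]
  rintro _ ⟨x, c, y, rfl⟩
  ext i
  simp [mul_assoc]

noncomputable def balancedTensorEquivPi [Fintype ι] (b : Module.Basis ι B N) :
    (A ⊗[k] N ⧸ B.balancingRel N) ≃ₗ[k] (ι → A) :=
  LinearEquiv.ofLinearMap ((B.balancingRel N).liftQ (mulRepr b) (balancingRel_le_ker_mulRepr b))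
    (sumTmulBasis b)
    (by
      classical
      ext i x j
      rcases eq_or_ne i j with rfl | hij <;>
        simp [Finset.sum_apply, Finsupp.single_apply, Pi.single_apply, *])
    (by
      apply Submodule.linearMap_qext
      ext x y
      change sumTmulBasis b (mulRepr b (x ⊗ₜ y)) = Submodule.Quotient.mk (x ⊗ₜ y)
      simp_rw [sumTmulBasis_apply, mulRepr_tmul, mk_mul_tmul_eq_mk_tmul_smul, ← Submodule.mkQ_apply,
        ← map_sum, ← tmul_sum, b.sum_repr])

theorem finrank_quotient_balancingRel [Nontrivial k] [Module.Free k A] [Module.Finite k A]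
    [Fintype ι] (b : Module.Basis ι B N) :
    Module.finrank k (A ⊗[k] N ⧸ B.balancingRel N) = Fintype.card ι * Module.finrank k A := by
  rw [(balancedTensorEquivPi b).finrank_eq, Module.finrank_pi_fintype]
  simp

end Subalgebra

theorem schneider_isomorphism_integral_and_quotient_dimension_general
    (k : Type*) [Field k] (H : Type*) [Ring H] [HopfAlgebra k H] [FiniteDimensional k H]
    (K : Subalgebra k H)
    -- `Λ` is a nonzero two-sided integral of `H`
    (Λ : H)
    (hΛr : ∀ a : H, Λ * a = (counit (R := k) a : k) • Λ) :
    -- with `J = K⁺H` and `rel` the middle `K`-relations defining `H ⊗_K H`: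
    ∀ (J : Submodule k H), J = Submodule.span k
      {z : H | ∃ x ∈ K, (counit (R := k) x : k) = 0 ∧ ∃ h : H, z = x * h} →
    ∀ (rel : Submodule k (H ⊗[k] H)), rel = Submodule.span k
      {z | ∃ (x y b : H), b ∈ K ∧ z = (x * b) ⊗ₜ[k] y - x ⊗ₜ[k] (b * y)} →
    -- given the Schneider canonical isomorphism `β̄ : H ⊗_K H ≅ H ⊗ (H/K⁺H)`
    (∃ βbar : ((H ⊗[k] H) ⧸ rel) →ₗ[k] H ⊗[k] (H ⧸ J),
      (∀ x y : H, βbar (Submodule.Quotient.mk (x ⊗ₜ[k] y)) =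
        TensorProduct.map (LinearMap.mulLeft k x) J.mkQ (comul (R := k) y)) ∧
      Function.Bijective βbar) →
    -- (1) `β̄` sends `Λ ⊗_K a` to `Λ ⊗ ā`:
    (∀ a : H,
      TensorProduct.map (LinearMap.mulLeft k Λ) J.mkQ (comul (R := k) a)
        = Λ ⊗ₜ[k] (J.mkQ a)) ∧
    -- (2) if `H ≅ K^n` as left `K`-modules then `dim (H/K⁺H) = n`
    (∀ n : ℕ, (Nonempty (H ≃ₗ[K] (Fin n → K))) → Module.finrank k (H ⧸ J) = n) := by
  intro J _ rel hrel ⟨βbar, _, hβbar⟩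
  refine ⟨Coalgebra.map_mulLeft_comul_of_mul_eq_counit_smul hΛr J.mkQ, ?_⟩
  rintro n ⟨e⟩
  have hrelK : rel = K.balancingRel H := by
    rw [hrel, Subalgebra.balancingRel]
    congr 1
    ext z
    exact ⟨fun ⟨x, y, b, hb, hz⟩ => ⟨x, ⟨b, hb⟩, y, hz⟩, fun ⟨x, b, y, hz⟩ => ⟨x, y, b, b.2, hz⟩⟩
  have : Nontrivial H := Bialgebra.nontrivial k
  have hdim := Subalgebra.finrank_quotient_balancingRel (k := k) (Module.Basis.ofEquivFun e)
  rw [← hrelK, (LinearEquiv.ofBijective βbar hβbar).finrank_eq, Module.finrank_tensorProduct,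
    Fintype.card_fin, mul_comm n] at hdim
  exact Nat.eq_of_mul_eq_mul_left Module.finrank_pos hdim

/-- Let `K` be a normal Hopf subalgebra of a finite dimensional Hopf algebra
`H` over a field, with `n = dim H / dim K`, and `Λ_H` a nonzero two-sided integral of `H`.
Then the Schneider canonical isomorphism `β̄ : H ⊗_K H ≅ H ⊗ (H/K⁺H)`,
`a ⊗_K b ↦ a b₍₁₎ ⊗ (b₍₂₎ mod K⁺H)`, sends `Λ_H ⊗_K a` to `Λ_H ⊗ (a mod K⁺H)`; consequently
if `H ≅ K^n` as left `K`-modules then `dim (H/K⁺H) = n`. -/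
theorem schneider_isomorphism_integral_and_quotient_dimension
    (k : Type*) [Field k] (H : Type*) [Ring H] [HopfAlgebra k H] [FiniteDimensional k H]
    (K : Subalgebra k H)
    -- `K` is a Hopf subalgebra
    (hΔ : ∀ x ∈ K, comul (R := k) x ∈
      LinearMap.range (TensorProduct.map K.val.toLinearMap K.val.toLinearMap))
    (hSK : ∀ x ∈ K, antipode (R := k) x ∈ K)
    -- `K` is normal in `H`
    (hnormal : ∀ a : H, ∀ x ∈ K,
      LinearMap.mul' k H
        ((TensorProduct.map (LinearMap.mulRight k x) (antipode (R := k)))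
          (comul (R := k) a)) ∈ K)
    -- `Λ` is a nonzero two-sided integral of `H`
    (Λ : H) (hΛ0 : Λ ≠ 0)
    (hΛl : ∀ a : H, a * Λ = (counit (R := k) a : k) • Λ)
    (hΛr : ∀ a : H, Λ * a = (counit (R := k) a : k) • Λ) :
    -- with `J = K⁺H` and `rel` the middle `K`-relations defining `H ⊗_K H`:
    ∀ (J : Submodule k H), J = Submodule.span k
      {z : H | ∃ x ∈ K, (counit (R := k) x : k) = 0 ∧ ∃ h : H, z = x * h} →
    ∀ (rel : Submodule k (H ⊗[k] H)), rel = Submodule.span k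
      {z | ∃ (x y b : H), b ∈ K ∧ z = (x * b) ⊗ₜ[k] y - x ⊗ₜ[k] (b * y)} →
    -- given the Schneider canonical isomorphism `β̄ : H ⊗_K H ≅ H ⊗ (H/K⁺H)`
    (∃ βbar : ((H ⊗[k] H) ⧸ rel) →ₗ[k] H ⊗[k] (H ⧸ J),
      (∀ x y : H, βbar (Submodule.Quotient.mk (x ⊗ₜ[k] y)) =
        TensorProduct.map (LinearMap.mulLeft k x) J.mkQ (comul (R := k) y)) ∧
      Function.Bijective βbar) →
    -- (1) `β̄` sends `Λ ⊗_K a` to `Λ ⊗ ā`: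
    (∀ a : H,
      TensorProduct.map (LinearMap.mulLeft k Λ) J.mkQ (comul (R := k) a)
        = Λ ⊗ₜ[k] (J.mkQ a)) ∧
    -- (2) if `H ≅ K^n` as left `K`-modules then `dim (H/K⁺H) = n`
    (∀ n : ℕ, (Nonempty (H ≃ₗ[K] (Fin n → K))) → Module.finrank k (H ⧸ J) = n) :=
  schneider_isomorphism_integral_and_quotient_dimension_general k H K Λ hΛr
end
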